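/- arXiv:2006.06720 — 11 statements merged into one kernel-verified Lean document; each statement's English description precedes it below -/
import Mathlib

section
/- Let R be an associative ring with identity and let a, b, c, d ∈ R satisfy (ac)² = (db)(ac), (db)² = (ac)(db), b(ac)a = b(db)a, and c(ac)d = c(db)d. Then ac is quasinilpotent if and only if bd is quasinilpotent. -/
/-- An element `q` of a ring is quasinilpotent if `1 + q * x` is a unit
for every `x` commuting with `q`. -/
def IsQuasinilpotent {R : Type*} [Ring R] (q : R) : Prop :=
  ∀ x : R, x * q = q * x → IsUnit (1 + q * x)

section aux

variable {R : Type*} [Ring R]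

/-- A left and a right inverse make a unit. -/
private lemma isUnit_of_left_right (u l r : R) (hl : l * u = 1) (hr : u * r = 1) :
    IsUnit u := by
  have hlr : l = r := by
    calc l = l * (u * r) := by rw [hr, mul_one]
    _ = l * u * r := by rw [mul_assoc]
    _ = r := by rw [hl, one_mul]
  exact isUnit_iff_exists.2 ⟨r, hr, hlr ▸ hl⟩

/-- Jacobson's lemma. -/
private lemma jacobson {u v : R} (h : IsUnit (1 + u * v)) : IsUnit (1 + v * u) := by
  obtain ⟨w, hw1, hw2⟩ := isUnit_iff_exists.1 h
  have k1 : u * v * w = 1 - w := by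
    have h' : w + u * v * w = 1 := by rw [← hw1]; noncomm_ring
    exact eq_sub_of_add_eq' h'
  have k2 : w * u * v = 1 - w := by
    have h' : w + w * u * v = 1 := by rw [← hw2]; noncomm_ring
    exact eq_sub_of_add_eq' h'
  have r1 : (1 + v * u) * (1 - v * w * u) = 1 := by
    have e : (1 + v * u) * (1 - v * w * u) = 1 + v * u - v * w * u - v * (u * v * w) * u := by
      noncomm_ring
    rw [e, k1]; noncomm_ring
  have r2 : (1 - v * w * u) * (1 + v * u) = 1 := by
    have e : (1 - v * w * u) * (1 + v * u) = 1 + v * u - v * w * u - v * (w * u * v) * u := by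
      noncomm_ring
    rw [e, k2]; noncomm_ring
  exact isUnit_of_left_right _ _ _ r2 r1

/-- If `1 + q ^ n * y` is a unit for every `y` commuting with `q`, then `q` is
quasinilpotent. -/
private lemma qn_of_pow (q : R) (n : ℕ)
    (h : ∀ y : R, y * q = q * y → IsUnit (1 + q ^ n * y)) : IsQuasinilpotent q := by
  intro x hx
  have hcx : Commute q x := hx.symm
  set t : R := -(q * x) with ht
  have hy : (-((-x) ^ n)) * q = q * (-((-x) ^ n)) := by
    have h1 : Commute q ((-x) ^ n) := (hcx.neg_right).pow_right n
    calc (-((-x) ^ n)) * q = -((-x) ^ n * q) := by noncomm_ring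
    _ = -(q * (-x) ^ n) := by rw [← h1.eq]
    _ = q * (-((-x) ^ n)) := by noncomm_ring
  have hu : IsUnit (1 + q ^ n * (-((-x) ^ n))) := h _ hy
  have htn : t ^ n = q ^ n * (-x) ^ n := by
    have e : t = q * (-x) := by rw [ht]; noncomm_ring
    rw [e, (hcx.neg_right).mul_pow]
  have he : 1 + q ^ n * (-((-x) ^ n)) = 1 - t ^ n := by
    rw [mul_neg, ← sub_eq_add_neg, htn]
  rw [he] at hu
  obtain ⟨w, hw1, hw2⟩ := isUnit_iff_exists.1 hu
  have g1' : (∑ i ∈ Finset.range n, t ^ i) * (1 - t) = 1 - t ^ n := by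
    calc (∑ i ∈ Finset.range n, t ^ i) * (1 - t)
        = -((∑ i ∈ Finset.range n, t ^ i) * (t - 1)) := by noncomm_ring
    _ = -(t ^ n - 1) := by rw [geom_sum_mul]
    _ = 1 - t ^ n := by noncomm_ring
  have g2' : (1 - t) * (∑ i ∈ Finset.range n, t ^ i) = 1 - t ^ n := by
    calc (1 - t) * (∑ i ∈ Finset.range n, t ^ i)
        = -((t - 1) * (∑ i ∈ Finset.range n, t ^ i)) := by noncomm_ring
    _ = -(t ^ n - 1) := by rw [mul_geom_sum]
    _ = 1 - t ^ n := by noncomm_ring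
  have hq : 1 + q * x = 1 - t := by rw [ht]; noncomm_ring
  rw [hq]
  have L : (w * (∑ i ∈ Finset.range n, t ^ i)) * (1 - t) = 1 := by
    rw [mul_assoc, g1', hw2]
  have Rr : (1 - t) * ((∑ i ∈ Finset.range n, t ^ i) * w) = 1 := by
    rw [← mul_assoc, g2', hw1]
  exact isUnit_of_left_right _ _ _ L Rr

/-- Cline's formula for quasinilpotents. -/
private lemma cline (u v : R) (h : IsQuasinilpotent (u * v)) : IsQuasinilpotent (v * u) := by
  refine qn_of_pow (v * u) 2 ?_
  intro y hy
  have hc : (u * (y * v)) * (u * v) = (u * v) * (u * (y * v)) := by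
    calc (u * (y * v)) * (u * v) = u * (y * (v * u)) * v := by noncomm_ring
    _ = u * ((v * u) * y) * v := by rw [hy]
    _ = (u * v) * (u * (y * v)) := by noncomm_ring
  have hu1 := h (u * (y * v)) hc
  have e1 : 1 + (u * v) * (u * (y * v)) = 1 + u * (v * u * y * v) := by noncomm_ring
  rw [e1] at hu1
  have hu2 := jacobson hu1
  have e2 : 1 + (v * u * y * v) * u = 1 + (v * u) ^ 2 * y := by
    calc 1 + (v * u * y * v) * u = 1 + (v * u) * (y * (v * u)) := by noncomm_ring
    _ = 1 + (v * u) * ((v * u) * y) := by rw [hy]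
    _ = 1 + (v * u) ^ 2 * y := by noncomm_ring
  rw [e2] at hu2
  exact hu2

/-- The main one-directional lemma. -/
private lemma main_dir (a b c d : R)
    (h1 : (a * c) ^ 2 = (d * b) * (a * c))
    (h2 : (d * b) ^ 2 = (a * c) * (d * b))
    (h3 : b * (a * c) * a = b * (d * b) * a)
    (h4 : c * (a * c) * d = c * (d * b) * d)
    (h : IsQuasinilpotent (a * c)) : IsQuasinilpotent (b * d) := by
  have h1' : (a * c) * (a * c) = (d * b) * (a * c) := by rw [← sq]; exact h1
  have h2' : (d * b) * (d * b) = (a * c) * (d * b) := by rw [← sq]; exact h2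
  refine qn_of_pow (b * d) 4 ?_
  intro y hy
  -- z = d*y*b commutes with d*b
  have hz : (d * y * b) * (d * b) = (d * b) * (d * y * b) := by
    calc (d * y * b) * (d * b) = d * (y * (b * d)) * b := by noncomm_ring
    _ = d * ((b * d) * y) * b := by rw [hy]
    _ = (d * b) * (d * y * b) := by noncomm_ring
  -- (ac)(dyb)(ac) commutes with ac
  have key : ((a * c) * (d * y * b) * (a * c)) * (a * c)
      = (a * c) * ((a * c) * (d * y * b) * (a * c)) := by
    calc ((a * c) * (d * y * b) * (a * c)) * (a * c)
        = (a * c * d) * y * (b * (a * c) * a) * c := by noncomm_ring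
    _ = (a * c * d) * y * (b * (d * b) * a) * c := by rw [h3]
    _ = (a * c * d) * (y * (b * d)) * (b * a * c) := by noncomm_ring
    _ = (a * c * d) * ((b * d) * y) * (b * a * c) := by rw [hy]
    _ = a * (c * (d * b) * d) * (y * (b * a * c)) := by noncomm_ring
    _ = a * (c * (a * c) * d) * (y * (b * a * c)) := by rw [← h4]
    _ = (a * c) * ((a * c) * (d * y * b) * (a * c)) := by noncomm_ring
  have u1 := h ((a * c) * (d * y * b) * (a * c)) key
  -- Jacobson: move the trailing (a*c) to the front
  have e1 : 1 + (a * c) * ((a * c) * (d * y * b) * (a * c))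
      = 1 + ((a * c) * ((a * c) * (d * y * b))) * (a * c) := by noncomm_ring
  rw [e1] at u1
  have u2 := jacobson u1
  -- now 1 + (ac)*((ac)*((ac)*(dyb))) is a unit; rewrite p^3 z = q^2 (p z)
  have e2 : 1 + (a * c) * ((a * c) * ((a * c) * (d * y * b)))
      = 1 + ((d * b) * (d * b)) * ((a * c) * (d * y * b)) := by
    calc 1 + (a * c) * ((a * c) * ((a * c) * (d * y * b)))
        = 1 + (a * c) * (((a * c) * (a * c)) * (d * y * b)) := by noncomm_ring
    _ = 1 + (a * c) * (((d * b) * (a * c)) * (d * y * b)) := by rw [h1']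
    _ = 1 + ((a * c) * (d * b)) * ((a * c) * (d * y * b)) := by noncomm_ring
    _ = 1 + ((d * b) * (d * b)) * ((a * c) * (d * y * b)) := by rw [← h2']
  rw [e2] at u2
  have u3 := jacobson u2
  -- now 1 + ((ac)*(dyb))*((db)*(db)) is a unit; rewrite to 1 + q^3 z
  have e3 : 1 + ((a * c) * (d * y * b)) * ((d * b) * (d * b))
      = 1 + (((d * b) * (d * b) * (d * b)) * (d * y)) * b := by
    calc 1 + ((a * c) * (d * y * b)) * ((d * b) * (d * b))
        = 1 + (a * c) * ((d * y * b) * (d * b)) * (d * b) := by noncomm_ring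
    _ = 1 + (a * c) * ((d * b) * (d * y * b)) * (d * b) := by rw [hz]
    _ = 1 + ((a * c) * (d * b)) * ((d * y * b) * (d * b)) := by noncomm_ring
    _ = 1 + ((a * c) * (d * b)) * ((d * b) * (d * y * b)) := by rw [hz]
    _ = 1 + ((d * b) * (d * b)) * ((d * b) * (d * y * b)) := by rw [← h2']
    _ = 1 + (((d * b) * (d * b) * (d * b)) * (d * y)) * b := by noncomm_ring
  rw [e3] at u3
  have u4 := jacobson u3
  have e4 : 1 + b * (((d * b) * (d * b) * (d * b)) * (d * y)) = 1 + (b * d) ^ 4 * y := by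
    noncomm_ring
  rw [e4] at u4
  exact u4

end aux

theorem stmt_0 {R : Type*} [Ring R] (a b c d : R)
    (h1 : (a * c) ^ 2 = (d * b) * (a * c))
    (h2 : (d * b) ^ 2 = (a * c) * (d * b))
    (h3 : b * (a * c) * a = b * (d * b) * a)
    (h4 : c * (a * c) * d = c * (d * b) * d) :
    IsQuasinilpotent (a * c) ↔ IsQuasinilpotent (b * d) := by
  constructor
  · intro h
    exact main_dir a b c d h1 h2 h3 h4 h
  · intro h
    have hdb : IsQuasinilpotent (d * b) := cline b d h
    have hca : IsQuasinilpotent (c * a) := main_dir d c b a h2 h1 h4.symm h3.symm hdb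
    exact cline c a hca
end

section
/- Let R be an associative ring with identity and let a, b, c ∈ R satisfy (aba)b = (aca)b, b(aba) = b(aca), (aba)c = (aca)c, and c(aba) = c(aca). Then ac has a g-Drazin inverse if and only if ba has a g-Drazin inverse; moreover, if e is a g-Drazin inverse of ac, then b·e²·a is a g-Drazin inverse of ba. -/
/-- `e` is a g-Drazin inverse of `a`. -/
def IsGDrazinInverse {R : Type*} [Ring R] (a e : R) : Prop :=
  e = e * a * e ∧ (∀ y : R, y * a = a * y → e * y = y * e) ∧
    IsQuasinilpotent (a - a ^ 2 * e)

section Aux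

variable {R : Type*} [Ring R]

private lemma isUnit_lr {b x y : R} (hx : x*b = 1) (hy : b*y = 1) : IsUnit b := by
  have hxy : x = y := by
    calc x = x*(b*y) := by rw [hy, mul_one]
    _ = x*b*y := by rw [mul_assoc]
    _ = y := by rw [hx, one_mul]
  exact ⟨⟨b, y, hy, by rw [← hxy]; exact hx⟩, rfl⟩

private lemma unit_swap {u v : R} (h : IsUnit (1 + u*v)) : IsUnit (1 + v*u) := by
  obtain ⟨w, hw⟩ := h
  have h1 : (1 + u*v) * (↑w⁻¹ : R) = 1 := by rw [← hw]; exact w.mul_inv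
  have h2 : (↑w⁻¹ : R) * (1 + u*v) = 1 := by rw [← hw]; exact w.inv_mul
  refine isUnit_lr (x := 1 - v*((↑w⁻¹ : R)*u)) (y := 1 - v*((↑w⁻¹ : R)*u)) ?_ ?_
  · have expand : (1 - v*((↑w⁻¹:R)*u))*(1+v*u)
        = 1 + v*u - v*(((↑w⁻¹:R))*(1+u*v))*u := by noncomm_ring
    rw [expand, h2]; noncomm_ring
  · have expand : (1+v*u)*(1 - v*((↑w⁻¹:R)*u))
        = 1 + v*u - v*((1+u*v)*(↑w⁻¹:R))*u := by noncomm_ring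
    rw [expand, h1]; noncomm_ring

private lemma unit_of_cube {t : R} (h : IsUnit (1 + t*(t*t))) : IsUnit (1 + t) := by
  obtain ⟨w, hw⟩ := h
  have h1 : (1 + t*(t*t)) * (↑w⁻¹ : R) = 1 := by rw [← hw]; exact w.mul_inv
  have h2 : (↑w⁻¹ : R) * (1 + t*(t*t)) = 1 := by rw [← hw]; exact w.inv_mul
  refine isUnit_lr (x := (↑w⁻¹ : R) * (1 - t + t*t)) (y := (1 - t + t*t) * (↑w⁻¹ : R)) ?_ ?_
  · have e1 : (1 - t + t*t) * (1+t) = 1 + t*(t*t) := by noncomm_ring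
    rw [mul_assoc, e1, h2]
  · have e1 : (1+t) * (1 - t + t*t) = 1 + t*(t*t) := by noncomm_ring
    rw [← mul_assoc, e1, h1]

private lemma lemQN (a b c : R)
    (h1 : a * b * a * b = a * c * a * b)
    (h2 : b * (a * b * a) = b * (a * c * a))
    (h3 : a * b * a * c = a * c * a * c)
    (h4 : c * (a * b * a) = c * (a * c * a))
    (hq : IsQuasinilpotent (a * c)) : IsQuasinilpotent (b * a) := by
  intro x hx
  have HX : ∀ z : R, x*(b*(a*z)) = b*(a*(x*z)) := fun z => by
    simpa only [mul_assoc] using congrArg (· * z) hx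
  have h3n : a*(b*(a*c)) = a*(c*(a*c)) := by simpa only [mul_assoc] using h3
  have H1 : ∀ z : R, a*(b*(a*(b*z))) = a*(c*(a*(b*z))) := fun z => by
    simpa only [mul_assoc] using congrArg (· * z) h1
  have H2 : ∀ z : R, b*(a*(b*(a*z))) = b*(a*(c*(a*z))) := fun z => by
    simpa only [mul_assoc] using congrArg (· * z) h2
  have H4 : ∀ z : R, c*(a*(b*(a*z))) = c*(a*(c*(a*z))) := fun z => by
    simpa only [mul_assoc] using congrArg (· * z) h4
  have HX3 : ∀ z : R, x*(x*(x*(b*(a*z)))) = b*(a*(x*(x*(x*z)))) := fun z => by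
    rw [HX z, HX, HX]
  have hz0 : (a*(x*(x*(x*(b*(a*c))))))*(a*c) = (a*c)*(a*(x*(x*(x*(b*(a*c)))))) := by
    simp only [mul_assoc]
    rw [← h3n, HX3 (b*(a*c)), HX3 c, H1]
  have hu3 : IsUnit (1 + (a*c)*(a*(x*(x*(x*(b*(a*c))))))) := hq _ hz0
  have hu3' : IsUnit (1 + ((a*c)*(a*(x*(x*(x*b)))))*(a*c)) := by
    have hh : ((a*c)*(a*(x*(x*(x*b)))))*(a*c) = (a*c)*(a*(x*(x*(x*(b*(a*c)))))) := by
      simp only [mul_assoc]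
    rw [hh]; exact hu3
  have hu2 : IsUnit (1 + (a*c)*((a*c)*(a*(x*(x*(x*b)))))) := unit_swap hu3'
  have hu2' : IsUnit (1 + ((a*c)*((a*c)*(a*(x*(x*x)))))*b) := by
    have hh : ((a*c)*((a*c)*(a*(x*(x*x)))))*b = (a*c)*((a*c)*(a*(x*(x*(x*b))))) := by
      simp only [mul_assoc]
    rw [hh]; exact hu2
  have hu1 : IsUnit (1 + b*((a*c)*((a*c)*(a*(x*(x*x)))))) := unit_swap hu2'
  have hcube : (b*a*x)*((b*a*x)*(b*a*x)) = b*((a*c)*((a*c)*(a*(x*(x*x))))) := by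
    simp only [mul_assoc]
    rw [HX, HX, HX, H2, H4]
  have hun : IsUnit (1 + (b*a*x)*((b*a*x)*(b*a*x))) := by rw [hcube]; exact hu1
  exact unit_of_cube hun

private lemma lemMain (a b c e : R)
    (h1 : a * b * a * b = a * c * a * b)
    (h2 : b * (a * b * a) = b * (a * c * a))
    (h3 : a * b * a * c = a * c * a * c)
    (h4 : c * (a * b * a) = c * (a * c * a))
    (he : IsGDrazinInverse (a * c) e) :
    IsGDrazinInverse (b * a) (b * e ^ 2 * a) := by
  obtain ⟨he1, he2, he3⟩ := he
  have hcomm : e * (a*c) = (a*c) * e := he2 (a*c) rfl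
  have H1 : ∀ z : R, a*(b*(a*(b*z))) = a*(c*(a*(b*z))) := fun z => by
    simpa only [mul_assoc] using congrArg (· * z) h1
  have H2 : ∀ z : R, b*(a*(b*(a*z))) = b*(a*(c*(a*z))) := fun z => by
    simpa only [mul_assoc] using congrArg (· * z) h2
  have H3 : ∀ z : R, a*(b*(a*(c*z))) = a*(c*(a*(c*z))) := fun z => by
    simpa only [mul_assoc] using congrArg (· * z) h3
  have H4 : ∀ z : R, c*(a*(b*(a*z))) = c*(a*(c*(a*z))) := fun z => by
    simpa only [mul_assoc] using congrArg (· * z) h4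
  have h1n : a*(b*(a*b)) = a*(c*(a*b)) := by simpa only [mul_assoc] using h1
  have h2n : b*(a*(b*a)) = b*(a*(c*a)) := by simpa only [mul_assoc] using h2
  have h3n : a*(b*(a*c)) = a*(c*(a*c)) := by simpa only [mul_assoc] using h3
  have h4n : c*(a*(b*a)) = c*(a*(c*a)) := by simpa only [mul_assoc] using h4
  have HEc : ∀ z : R, e*(a*(c*z)) = a*(c*(e*z)) := fun z => by
    simpa only [mul_assoc] using congrArg (· * z) hcomm
  have hcn : e*(a*c) = a*(c*e) := by simpa only [mul_assoc] using hcomm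
  have he1n : e = e*(a*(c*e)) := by simpa only [mul_assoc] using he1
  have HErep : ∀ z : R, e*z = e*(a*(c*(e*z))) := fun z => by
    simpa only [mul_assoc] using congrArg (· * z) he1
  have hee : e = e*(e*(a*c)) := by
    conv_lhs => rw [he1n]
    rw [← hcn]
  have HErep2 : ∀ z : R, e*z = e*(e*(a*(c*z))) := fun z => by
    simpa only [mul_assoc] using congrArg (· * z) hee
  have K0 : ∀ z : R, a*(c*(e*(e*z))) = e*z := fun z => by rw [← HEc, ← HErep]
  have K1 : ∀ z : R, a*(b*(e*(e*z))) = e*z := fun z => by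
    rw [HErep (e*z), HEc, H3 (e*(e*(e*z))), K0 (e*z), K0 z]
  have eaba : e*(a*(b*a)) = e*(a*(c*a)) := by
    rw [HErep2 (a*(b*a)), h4n, HEc, ← HErep]
  have Eaba : ∀ z : R, e*(a*(b*(a*z))) = e*(a*(c*(a*z))) := fun z => by
    rw [HErep2 (a*(b*(a*z))), H4 z, HEc, ← HErep]
  have heps : e*(a*(c*e)) = e := he1n.symm
  have HPP : ∀ z : R, e*(a*(c*(e*z))) = e*z := fun z => (HErep z).symm
  refine ⟨?_, ?_, ?_⟩
  · -- f = f (ba) f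
    simp only [pow_two, mul_assoc]
    rw [H1, K1 a, ← HErep a]
  · -- commutation
    intro y hy
    have hyn : y*(b*a) = b*(a*y) := by simpa only [mul_assoc] using hy
    have HY : ∀ z : R, y*(b*(a*z)) = b*(a*(y*z)) := fun z => by
      simpa only [mul_assoc] using congrArg (· * z) hy
    have hz : (a*(y*(b*(a*c))))*(a*c) = (a*c)*(a*(y*(b*(a*c)))) := by
      simp only [mul_assoc]
      rw [← h3n, HY, HY, H1]
    have hze : e*(a*(y*(b*(a*c)))) = (a*(y*(b*(a*c))))*e := he2 _ hz
    have HZe : ∀ z : R, e*(a*(y*(b*(a*(c*z))))) = a*(y*(b*(a*(c*(e*z))))) := fun z => by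
      simpa only [mul_assoc] using congrArg (· * z) hze
    have HZu : ∀ z : R, a*(y*(b*(a*(c*(a*(c*z)))))) = a*(c*(a*(y*(b*(a*(c*z)))))) := fun z => by
      simpa only [mul_assoc] using congrArg (· * z) hz
    simp only [pow_two, mul_assoc]
    rw [HErep (a*y), HErep (a*y), HErep (a*y)]
    simp only [← HEc]
    rw [← H4 y, ← H4 (b*(a*y)), ← hyn, ← HY (b*a), h2n, ← HZu a]
    simp only [HZe]
    rw [HEc a, ← HErep a, ← HY, H2, K0 (e*(e*a)), K0 (e*a)]
  · -- quasinilpotency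
    have t1 : (b*a)^2*(b*e^2*a) = b*(a*(c*(e*a))) := by
      simp only [pow_two, mul_assoc]
      rw [H2, K1 a]
    have heq : b*a - (b*a)^2*(b*e^2*a) = b*((1 - a*c*e)*a) := by
      rw [t1]; noncomm_ring
    rw [heq]
    have hpp : a*c*e*(a*c*e) = a*c*e := by
      have hh : a*c*e*(a*c*e) = a*c*(e*(a*c)*e) := by simp only [mul_assoc]
      rw [hh, ← he1]
    have hqq2 : (1 - a*c*e)*(1 - a*c*e) = 1 - a*c*e := by
      simp only [mul_sub, sub_mul, mul_one, one_mul]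
      rw [hpp]; abel
    have Hqq : ∀ z : R, (1 - a*c*e)*((1 - a*c*e)*z) = (1 - a*c*e)*z := fun z => by
      simpa only [mul_assoc] using congrArg (· * z) hqq2
    have hca : a*c*(a*c*e) = a*c*e*(a*c) := by
      simp only [mul_assoc]; rw [hcn]
    have s2 : (a*c)*(1 - a*c*e) = (1 - a*c*e)*(a*c) := by
      simp only [mul_sub, sub_mul, mul_one, one_mul, hca]
    have hδ : ((1 - a*c*e)*a)*(c*(1 - a*c*e)) = a*c - (a*c)^2*e := by
      have s1 : ((1 - a*c*e)*a)*(c*(1 - a*c*e)) = (1 - a*c*e)*((a*c)*(1 - a*c*e)) := by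
        simp only [mul_assoc]
      rw [s1, s2, Hqq, ← s2]; noncomm_ring
    refine lemQN ((1 - a*c*e)*a) b (c*(1 - a*c*e)) ?_ ?_ ?_ ?_ ?_
    · simp only [mul_sub, sub_mul, one_mul, mul_one, mul_assoc]
      simp only [h1n, H1, h2n, H2, h3n, H3, h4n, H4, eaba, Eaba, heps, HPP]
      all_goals abel
    · simp only [mul_sub, sub_mul, one_mul, mul_one, mul_assoc]
      simp only [h1n, H1, h2n, H2, h3n, H3, h4n, H4, eaba, Eaba, heps, HPP]
      all_goals abel
    · simp only [mul_sub, sub_mul, one_mul, mul_one, mul_assoc]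
      simp only [h1n, H1, h2n, H2, h3n, H3, h4n, H4, eaba, Eaba, heps, HPP]
      all_goals abel
    · simp only [mul_sub, sub_mul, one_mul, mul_one, mul_assoc]
      simp only [h1n, H1, h2n, H2, h3n, H3, h4n, H4, eaba, Eaba, heps, HPP]
      all_goals abel
    · rw [hδ]; exact he3

end Aux

theorem stmt_2 {R : Type*} [Ring R] (a b c : R)
    (h1 : (a * b * a) * b = (a * c * a) * b)
    (h2 : b * (a * b * a) = b * (a * c * a))
    (h3 : (a * b * a) * c = (a * c * a) * c)
    (h4 : c * (a * b * a) = c * (a * c * a)) :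
    ((∃ e, IsGDrazinInverse (a * c) e) ↔ (∃ f, IsGDrazinInverse (b * a) f)) ∧
    (∀ e, IsGDrazinInverse (a * c) e →
      IsGDrazinInverse (b * a) (b * e ^ 2 * a)) := by
  constructor
  · constructor
    · rintro ⟨e, he⟩
      exact ⟨b * e ^ 2 * a, lemMain a b c e h1 h2 h3 h4 he⟩
    · rintro ⟨f, hf⟩
      have s1 : IsGDrazinInverse (a * b) (a * f ^ 2 * b) :=
        lemMain b a a f rfl rfl rfl rfl hf
      have s2 : IsGDrazinInverse (c * a) (c * (a * f ^ 2 * b) ^ 2 * a) :=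
        lemMain a c b (a * f ^ 2 * b) h3.symm h4.symm h1.symm h2.symm s1
      have s3 : IsGDrazinInverse (a * c)
          (a * (c * (a * f ^ 2 * b) ^ 2 * a) ^ 2 * c) :=
        lemMain c a a _ rfl rfl rfl rfl s2
      exact ⟨_, s3⟩
  · intro e he
    exact lemMain a b c e h1 h2 h3 h4 he
end

section
/- Let R be an associative ring with identity and let a, b, c, d ∈ R satisfy a·c·d = d·b·d and d·b·a = a·c·a. Then ac has a g-Drazin inverse if and only if bd has a g-Drazin inverse; moreover, if e is a g-Drazin inverse of ac, then b·e²·d is a g-Drazin inverse of bd. -/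
private lemma unit_of_commute_mul' {R : Type*} [Ring R] {A B : R}
    (h : A * B = B * A) (hu : IsUnit (A * B)) : IsUnit A := by
  obtain ⟨v, hv⟩ := hu
  have h1 : A * (B * ↑v⁻¹) = 1 := by rw [← mul_assoc, ← hv]; exact v.mul_inv
  have h2 : (↑v⁻¹ * B) * A = 1 := by rw [mul_assoc, ← h, ← hv]; exact v.inv_mul
  have h3 : (↑v⁻¹ * B : R) = B * ↑v⁻¹ := left_inv_eq_right_inv h2 h1
  rw [h3] at h2
  exact ⟨⟨A, B * ↑v⁻¹, h1, h2⟩, rfl⟩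

private lemma jacobson' {R : Type*} [Ring R] {a b : R}
    (h : IsUnit (1 + a * b)) : IsUnit (1 + b * a) := by
  obtain ⟨v, hv⟩ := h
  have hv1 : (1 + a * b) * ↑v⁻¹ = 1 := by rw [← hv]; exact v.mul_inv
  have hv2 : (↑v⁻¹ : R) * (1 + a * b) = 1 := by rw [← hv]; exact v.inv_mul
  refine ⟨⟨1 + b * a, 1 - b * ↑v⁻¹ * a, ?_, ?_⟩, rfl⟩
  · have e1 : (1 + b * a) * (1 - b * ↑v⁻¹ * a)
        = 1 + b * a - b * ((1 + a * b) * ↑v⁻¹) * a := by noncomm_ring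
    rw [e1, hv1]; noncomm_ring
  · have e2 : (1 - b * ↑v⁻¹ * a) * (1 + b * a)
        = 1 + b * a - b * ((↑v⁻¹ : R) * (1 + a * b)) * a := by noncomm_ring
    rw [e2, hv2]; noncomm_ring

private lemma gdrazin_key {R : Type*} [Ring R] (p b d e : R)
    (hdbd : d * b * d = p * d)
    (hdbp : d * b * p = p * p)
    (hepe : e = e * p * e)
    (hcomm : ∀ y : R, y * p = p * y → e * y = y * e)
    (hqn : IsQuasinilpotent (p - p ^ 2 * e)) :
    IsGDrazinInverse (b * d) (b * (e * e) * d) := by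
  rw [pow_two] at hqn
  have hqn' : ∀ x : R, x * (p - p * p * e) = (p - p * p * e) * x →
      IsUnit (1 + (p - p * p * e) * x) := hqn
  have hep : e * p = p * e := hcomm p rfl
  have hpee : p * e * e = e := by rw [← hep, ← hepe]
  have heep : e * e * p = e := by rw [mul_assoc, hep, ← mul_assoc, ← hepe]
  have hdbe : d * b * e = p * e := by
    calc d * b * e = d * b * (p * e * e) := by rw [hpee]
    _ = d * b * p * (e * e) := by noncomm_ring
    _ = p * p * (e * e) := by rw [hdbp]
    _ = p * (p * e * e) := by noncomm_ring
    _ = p * e := by rw [hpee]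
  have hdbee : d * b * (e * e) = e := by
    calc d * b * (e * e) = d * b * e * e := by noncomm_ring
    _ = p * e * e := by rw [hdbe]
    _ = e := hpee
  have hpd : p * d = d * (b * d) := by rw [← mul_assoc, hdbd]
  have hbdbp : b * d * b * p = b * (p * p) := by
    calc b * d * b * p = b * (d * b * p) := by noncomm_ring
    _ = b * (p * p) := by rw [hdbp]
  refine ⟨?_, ?_, ?_⟩
  · -- f = f * (b*d) * f
    symm
    calc b * (e*e) * d * (b*d) * (b * (e*e) * d)
        = b * (e*e) * (d*b*d) * (b * (e*e)) * d := by noncomm_ring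
      _ = b * (e*e) * (p*d) * (b * (e*e)) * d := by rw [hdbd]
      _ = b * (e*e*p) * (d*b*(e*e)) * d := by noncomm_ring
      _ = b * e * e * d := by rw [heep, hdbee]
      _ = b * (e*e) * d := by noncomm_ring
  · -- commutation
    intro y hy
    have hzp : (d*y*b*p) * p = p * (d*y*b*p) := by
      symm
      calc p * (d*y*b*p) = p * d * (y*b*p) := by noncomm_ring
        _ = d * (b*d) * (y*b*p) := by rw [hpd]
        _ = d * ((b*d)*y) * (b*p) := by noncomm_ring
        _ = d * (y*(b*d)) * (b*p) := by rw [hy]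
        _ = d * y * (b*d*b*p) := by noncomm_ring
        _ = d * y * (b*(p*p)) := by rw [hbdbp]
        _ = d*y*b*p*p := by noncomm_ring
    have hez : e * (d*y*b*p) = (d*y*b*p) * e := hcomm _ hzp
    have hez2 : e*e*(d*y*b*p) = d*y*b*p*(e*e) := by
      calc e*e*(d*y*b*p) = e*(e*(d*y*b*p)) := by noncomm_ring
        _ = e*((d*y*b*p)*e) := by rw [hez]
        _ = (e*(d*y*b*p))*e := by noncomm_ring
        _ = ((d*y*b*p)*e)*e := by rw [hez]
        _ = d*y*b*p*(e*e) := by noncomm_ring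
    have hE : e*e*e*e*(p*p) = e*e := by
      calc e*e*e*e*(p*p) = e*e*(e*e*p)*p := by noncomm_ring
        _ = e*e*e*p := by rw [heep]
        _ = e*(e*e*p) := by noncomm_ring
        _ = e*e := by rw [heep]
    have hE2 : p*p*(e*e*e*e) = e*e := by
      calc p*p*(e*e*e*e) = p*(p*e*e)*(e*e) := by noncomm_ring
        _ = p*e*(e*e) := by rw [hpee]
        _ = p*e*e*e := by noncomm_ring
        _ = e*e := by rw [hpee]
    have hppd : p*p*d = d*(b*d)*(b*d) := by
      calc p*p*d = p*(p*d) := by noncomm_ring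
        _ = p*(d*(b*d)) := by rw [hpd]
        _ = p*d*(b*d) := by noncomm_ring
        _ = d*(b*d)*(b*d) := by rw [hpd]
    calc b*(e*e)*d*y = b*(e*e*e*e*(p*p))*d*y := by rw [hE]
      _ = b*(e*e*e*e)*(p*p*d)*y := by noncomm_ring
      _ = b*(e*e*e*e)*(d*(b*d)*(b*d))*y := by rw [hppd]
      _ = b*(e*e*e*e)*(d*((b*d)*((b*d)*y))) := by noncomm_ring
      _ = b*(e*e*e*e)*(d*((b*d)*(y*(b*d)))) := by rw [← hy]
      _ = b*(e*e*e*e)*(d*(((b*d)*y)*(b*d))) := by noncomm_ring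
      _ = b*(e*e*e*e)*(d*((y*(b*d))*(b*d))) := by rw [← hy]
      _ = b*(e*e*e*e)*(d*y*b*(d*b*d)) := by noncomm_ring
      _ = b*(e*e*e*e)*(d*y*b*(p*d)) := by rw [hdbd]
      _ = b*(e*e)*(e*e*(d*y*b*p))*d := by noncomm_ring
      _ = b*(e*e)*(d*y*b*p*(e*e))*d := by rw [hez2]
      _ = b*(e*e*(d*y*b*p))*(e*e*d) := by noncomm_ring
      _ = b*(d*y*b*p*(e*e))*(e*e*d) := by rw [hez2]
      _ = (b*d)*y*(b*p*(e*e*e*e*d)) := by noncomm_ring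
      _ = y*(b*d)*(b*p*(e*e*e*e*d)) := by rw [← hy]
      _ = y*(b*d*b*p*(e*e*e*e)*d) := by noncomm_ring
      _ = y*(b*(p*p)*(e*e*e*e)*d) := by rw [hbdbp]
      _ = y*(b*(p*p*(e*e*e*e))*d) := by noncomm_ring
      _ = y*(b*(e*e)*d) := by rw [hE2]
  · -- quasinilpotency
    have hq2f : (b*d)^2*(b*(e*e)*d) = b*p*e*d := by
      calc (b*d)^2*(b*(e*e)*d) = b*(d*b*d)*(b*(e*e))*d := by rw [pow_two]; noncomm_ring
        _ = b*(p*d)*(b*(e*e))*d := by rw [hdbd]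
        _ = b*p*(d*b*(e*e))*d := by noncomm_ring
        _ = b*p*e*d := by rw [hdbee]
    rw [hq2f]
    have hdt : d*(b*d - b*p*e*d) = (p - p*p*e)*d := by
      calc d*(b*d - b*p*e*d) = d*(b*d) - d*b*p*(e*d) := by noncomm_ring
        _ = p*d - p*p*(e*d) := by rw [← hpd, hdbp]
        _ = (p - p*p*e)*d := by noncomm_ring
    have h1 : p*e*p = p*p*e := by rw [mul_assoc, hep, ← mul_assoc]
    have h2 : p*e*(p*p*e) = p*p*e := by
      calc p*e*(p*p*e) = (p*e*p)*(p*e) := by noncomm_ring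
        _ = (p*p*e)*(p*e) := by rw [h1]
        _ = p*p*(e*p)*e := by noncomm_ring
        _ = p*p*(p*e)*e := by rw [hep]
        _ = p*p*(p*e*e) := by noncomm_ring
        _ = p*p*e := by rw [hpee]
    have hpew : p*e*(p - p*p*e) = 0 := by rw [mul_sub, h1, h2, sub_self]
    have hdbw : d*b*(p - p*p*e) = p*(p - p*p*e) := by
      calc d*b*(p - p*p*e) = d*b*p - d*b*p*(p*e) := by noncomm_ring
        _ = p*p - p*p*(p*e) := by rw [hdbp]
        _ = p*(p - p*p*e) := by noncomm_ring
    have htbw : (b*d - b*p*e*d)*(b*(p - p*p*e)) = b*((p - p*p*e)*(p - p*p*e)) := by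
      calc (b*d - b*p*e*d)*(b*(p - p*p*e))
          = b*(d*b*(p - p*p*e)) - b*p*e*(d*b*(p - p*p*e)) := by noncomm_ring
        _ = b*(p*(p - p*p*e)) - b*p*e*(p*(p - p*p*e)) := by rw [hdbw]
        _ = b*(p*(p - p*p*e)) - b*(p*e*p)*(p - p*p*e) := by noncomm_ring
        _ = b*(p*(p - p*p*e)) - b*(p*p*e)*(p - p*p*e) := by rw [h1]
        _ = b*((p - p*p*e)*(p - p*p*e)) := by noncomm_ring
    have ht2 : (b*d - b*p*e*d)*(b*d - b*p*e*d) = b*((p - p*p*e)*d) := by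
      calc (b*d - b*p*e*d)*(b*d - b*p*e*d)
          = b*(d*(b*d - b*p*e*d)) - b*p*e*(d*(b*d - b*p*e*d)) := by noncomm_ring
        _ = b*((p - p*p*e)*d) - b*p*e*((p - p*p*e)*d) := by rw [hdt]
        _ = b*((p - p*p*e)*d) - b*(p*e*(p - p*p*e))*d := by noncomm_ring
        _ = b*((p - p*p*e)*d) - b*0*d := by rw [hpew]
        _ = b*((p - p*p*e)*d) := by noncomm_ring
    have ht3 : (b*d - b*p*e*d)^3 = b*((p - p*p*e)*((p - p*p*e)*d)) := by
      rw [pow_succ, pow_two]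
      calc (b*d - b*p*e*d)*(b*d - b*p*e*d)*(b*d - b*p*e*d)
          = (b*((p - p*p*e)*d))*(b*d - b*p*e*d) := by rw [ht2]
        _ = b*(p - p*p*e)*(d*(b*d - b*p*e*d)) := by noncomm_ring
        _ = b*(p - p*p*e)*((p - p*p*e)*d) := by rw [hdt]
        _ = b*((p - p*p*e)*((p - p*p*e)*d)) := by noncomm_ring
    intro x hx
    have hc : Commute x (b*d - b*p*e*d) := hx
    have hx3 : x^3 * (b*d - b*p*e*d) = (b*d - b*p*e*d) * x^3 := (hc.pow_left 3).eq
    have hwY : (p - p*p*e) * (d*(x^3)*(b*(p - p*p*e)))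
        = d*((x^3)*(b*((p - p*p*e)*(p - p*p*e)))) := by
      calc (p - p*p*e) * (d*(x^3)*(b*(p - p*p*e)))
          = ((p - p*p*e)*d)*((x^3)*(b*(p - p*p*e))) := by noncomm_ring
        _ = (d*(b*d - b*p*e*d))*((x^3)*(b*(p - p*p*e))) := by rw [← hdt]
        _ = d*(((b*d - b*p*e*d)*(x^3))*(b*(p - p*p*e))) := by noncomm_ring
        _ = d*(((x^3)*(b*d - b*p*e*d))*(b*(p - p*p*e))) := by rw [← hx3]
        _ = d*((x^3)*((b*d - b*p*e*d)*(b*(p - p*p*e)))) := by noncomm_ring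
        _ = d*((x^3)*(b*((p - p*p*e)*(p - p*p*e)))) := by rw [htbw]
    have hYw : (d*(x^3)*(b*(p - p*p*e)))*(p - p*p*e)
        = (p - p*p*e)*(d*(x^3)*(b*(p - p*p*e))) := by
      rw [hwY]; noncomm_ring
    have hu1 : IsUnit (1 + (p - p*p*e)*(d*(x^3)*(b*(p - p*p*e)))) := hqn' _ hYw
    rw [hwY] at hu1
    have hu2 : IsUnit (1 + ((x^3)*(b*((p - p*p*e)*(p - p*p*e))))*d) := jacobson' hu1
    have hNd : ((x^3)*(b*((p - p*p*e)*(p - p*p*e))))*d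
        = x^3*(b*d - b*p*e*d)^3 := by
      calc ((x^3)*(b*((p - p*p*e)*(p - p*p*e))))*d
          = x^3*(b*((p - p*p*e)*((p - p*p*e)*d))) := by noncomm_ring
        _ = x^3*(b*d - b*p*e*d)^3 := by rw [← ht3]
    rw [hNd, ← hc.mul_pow] at hu2
    have hAB : (1 + x*(b*d - b*p*e*d)) * (1 + (x*(b*d - b*p*e*d))^2 - x*(b*d - b*p*e*d))
        = 1 + (x*(b*d - b*p*e*d))^3 := by noncomm_ring
    have hBA : (1 + (x*(b*d - b*p*e*d))^2 - x*(b*d - b*p*e*d)) * (1 + x*(b*d - b*p*e*d))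
        = 1 + (x*(b*d - b*p*e*d))^3 := by noncomm_ring
    have hA : IsUnit (1 + x*(b*d - b*p*e*d)) := by
      refine unit_of_commute_mul' (hAB.trans hBA.symm) ?_
      rw [hAB]; exact hu2
    exact jacobson' hA

private lemma gdrazin_main {R : Type*} [Ring R] (a b c d : R)
    (h1 : a * c * d = d * b * d) (h2 : d * b * a = a * c * a)
    (e : R) (he : IsGDrazinInverse (a * c) e) :
    IsGDrazinInverse (b * d) (b * e ^ 2 * d) := by
  obtain ⟨he1, he2, he3⟩ := he
  have hdbp : d * b * (a * c) = (a * c) * (a * c) := by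
    calc d * b * (a * c) = (d * b * a) * c := by noncomm_ring
      _ = (a * c * a) * c := by rw [h2]
      _ = (a * c) * (a * c) := by noncomm_ring
  rw [pow_two]
  exact gdrazin_key (a * c) b d e h1.symm hdbp he1 he2 he3

theorem stmt_3 {R : Type*} [Ring R] (a b c d : R)
    (h1 : a * c * d = d * b * d)
    (h2 : d * b * a = a * c * a) :
    ((∃ e, IsGDrazinInverse (a * c) e) ↔ (∃ f, IsGDrazinInverse (b * d) f)) ∧
    (∀ e, IsGDrazinInverse (a * c) e →
      IsGDrazinInverse (b * d) (b * e ^ 2 * d)) := by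
  constructor
  · constructor
    · rintro ⟨e, he⟩
      exact ⟨b * e ^ 2 * d, gdrazin_main a b c d h1 h2 e he⟩
    · rintro ⟨f, hf⟩
      have s1 : IsGDrazinInverse (d * b) (d * f ^ 2 * b) :=
        gdrazin_main b d d b rfl rfl f hf
      have s2 : IsGDrazinInverse (c * a) (c * (d * f ^ 2 * b) ^ 2 * a) :=
        gdrazin_main d c b a h2 h1 _ s1
      have s3 : IsGDrazinInverse (a * c) (a * (c * (d * f ^ 2 * b) ^ 2 * a) ^ 2 * c) :=
        gdrazin_main c a a c rfl rfl _ s2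
      exact ⟨_, s3⟩
  · intro e he
    exact gdrazin_main a b c d h1 h2 e he
end

section
/- Let R be an associative ring with identity and let a, b, c, d ∈ R satisfy (ac)² = (db)(ac), (db)² = (ac)(db), b(ac)a = b(db)a, and c(ac)d = c(db)d. Then ac has a Drazin inverse if and only if bd has a Drazin inverse. Moreover, if e is a Drazin inverse of ac with (ac)^k = (ac)^{k+1}·e for some natural number k ≥ 1, then b·e²·d is a Drazin inverse of bd satisfying (bd)^{k+2} = (bd)^{k+3}·(b·e²·d); in particular the Drazin index of bd is at most the Drazin index of ac plus 2. -/
/-!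
Put `A = a * c` and `B = d * b`. If `e` is a Drazin inverse of `A`, the hypotheses let `B` replace
`A` next to `e`: `B * e ^ 2 = e` and `e * B * d = e * A * d`. So `f = b * e ^ 2 * d` satisfies
`f * (b * d) = b * e * d = (b * d) * f`. Moreover `(b * d) ^ (n + 2) = b * A ^ n * B * d`, and
`A ^ k * B * d = A ^ (k + 1) * d` when `A ^ k = A ^ (k + 1) * e`, which gives the index bound. An `f` commuting
with `x` with `f = f * x * f` and `x ^ m = x ^ (m + 1) * f` automatically commutes with everything
that commutes with `x`. The converse is the same argument with `(a, c)` and `(d, b)` exchanged,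
combined with Cline's formula to pass between `x * y` and `y * x`.
-/

/-- `e` is a Drazin inverse of `a`:  `e = e * a * e`, `e` doubly commutes with `a`,
and `a ^ k = a ^ (k + 1) * e` for some `k ≥ 1`. -/
def IsDrazinInverse {R : Type*} [Ring R] (a e : R) : Prop :=
  e = e * a * e ∧ (∀ y : R, y * a = a * y → e * y = y * e) ∧
    ∃ k : ℕ, 1 ≤ k ∧ a ^ k = a ^ (k + 1) * e

section Monoid

variable {M : Type*} [Monoid M]

theorem mul_pow_succ_eq_mul_pow_mul (a b : M) (n : ℕ) :
    (a * b) ^ (n + 1) = a * (b * a) ^ n * b := by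
  rw [pow_succ, ← mul_assoc, mul_pow_mul]

theorem pow_succ_eq_pow_mul_of_sq_eq_mul {a b : M} (h : b ^ 2 = a * b) :
    ∀ n : ℕ, b ^ (n + 1) = a ^ n * b
  | 0 => by simp
  | n + 1 => by
    rw [pow_succ, pow_succ_eq_pow_mul_of_sq_eq_mul h n, mul_assoc, ← sq, h, ← mul_assoc, ← pow_succ]

variable {x f : M}

theorem isIdempotentElem_mul_of_eq_mul_mul (hf : f = f * x * f) : IsIdempotentElem (f * x) := by
  rw [IsIdempotentElem, ← mul_assoc, ← hf]

theorem sq_mul_of_eq_mul_mul (hc : Commute x f) (hf : f = f * x * f) : f ^ 2 * x = f := by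
  rw [sq, mul_assoc, ← hc.eq, ← mul_assoc, ← hf]

theorem mul_sq_of_eq_mul_mul (hc : Commute x f) (hf : f = f * x * f) : x * f ^ 2 = f := by
  rw [sq, ← mul_assoc, hc.eq, ← hf]

theorem pow_mul_pow_succ_of_eq_mul_mul (hc : Commute x f) (hf : f = f * x * f) :
    ∀ n : ℕ, x ^ n * f ^ (n + 1) = f
  | 0 => by simp
  | n + 1 => by
    rw [pow_succ', pow_succ, mul_assoc, ← mul_assoc (x ^ n), pow_mul_pow_succ_of_eq_mul_mul hc hf n,
      ← sq, mul_sq_of_eq_mul_mul hc hf]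

end Monoid

namespace IsDrazinInverse

variable {R : Type*} [Ring R]

theorem of_commute {x f : R} {m : ℕ} (hc : Commute x f) (hf : f = f * x * f) (hm : 1 ≤ m)
    (hpow : x ^ m = x ^ (m + 1) * f) : IsDrazinInverse x f := by
  refine ⟨hf, fun y hy => ?_, m, hm, hpow⟩
  have hyx : Commute y x := hy
  have hidem := isIdempotentElem_mul_of_eq_mul_mul hf
  have hpow' : x ^ m = f * x ^ (m + 1) := hpow.trans (hc.pow_left _).eq
  have hf' : f = f ^ (m + 1) * x ^ m :=
    (pow_mul_pow_succ_of_eq_mul_mul hc hf m).symm.trans (hc.pow_pow _ _).eq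
  have hleft : f * y = f * x * y * f := calc
    f * y = f ^ (m + 1) * (y * x ^ m) := by
      rw [(hyx.pow_right m).eq, ← mul_assoc, ← hf']
    _ = (f * x) ^ (m + 1) * y * f := by
      rw [hpow, ← mul_assoc y, (hyx.pow_right _).eq, hc.symm.mul_pow]; simp only [mul_assoc]
    _ = f * x * y * f := by rw [hidem.pow_succ_eq]
  have hright : y * f = f * y * (x * f) := calc
    y * f = f * x ^ (m + 1) * y * f ^ (m + 1) := by
      rw [← hpow', ← (hyx.pow_right m).eq, mul_assoc, pow_mul_pow_succ_of_eq_mul_mul hc hf]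
    _ = f * y * (x * f) ^ (m + 1) := by
      rw [mul_assoc f, ← (hyx.pow_right _).eq, hc.mul_pow]; simp only [mul_assoc]
    _ = f * y * (x * f) := by rw [hc.eq, hidem.pow_succ_eq]
  rw [hleft, hright, mul_assoc f x y, ← hy]; simp only [mul_assoc]

theorem cline {x y g : R} (h : IsDrazinInverse (x * y) g) :
    IsDrazinInverse (y * x) (y * g ^ 2 * x) := by
  obtain ⟨hg, hcomm, m, hm, hpow⟩ := h
  have hc : Commute (x * y) g := (hcomm _ rfl).symm
  have hl := sq_mul_of_eq_mul_mul hc hg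
  have hr := mul_sq_of_eq_mul_mul hc hg
  refine of_commute (m := m + 1) ?_ ?_ (by omega) ?_
  · calc y * x * (y * g ^ 2 * x) = y * (x * y * g ^ 2) * x := by simp only [mul_assoc]
      _ = y * (g ^ 2 * (x * y)) * x := by rw [hl, hr]
      _ = y * g ^ 2 * x * (y * x) := by simp only [mul_assoc]
  · calc y * g ^ 2 * x = y * (g ^ 2 * (x * y)) * (x * y * g ^ 2) * x := by
          rw [hl, hr, sq, ← mul_assoc y]
      _ = y * g ^ 2 * x * (y * x) * (y * g ^ 2 * x) := by simp only [mul_assoc]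
  · calc (y * x) ^ (m + 1) = y * ((x * y) ^ (m + 1) * g) * x := by
          rw [← hpow, mul_pow_succ_eq_mul_pow_mul]
      _ = y * ((x * y) ^ (m + 1) * (x * y * g ^ 2)) * x := by rw [hr]
      _ = (y * x) ^ (m + 1 + 1) * (y * g ^ 2 * x) := by
          rw [mul_pow_succ_eq_mul_pow_mul y x (m + 1)]; simp only [mul_assoc]

theorem mul_sq_mul {A e : R} (b d : R) (he : IsDrazinInverse A e) (hA : A ^ 2 = d * b * A)
    (hB : (d * b) ^ 2 = A * (d * b)) (hBd : A * (d * b) * d = A ^ 2 * d) {k : ℕ}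
    (hek : A ^ k = A ^ (k + 1) * e) :
    IsDrazinInverse (b * d) (b * e ^ 2 * d) ∧
      (b * d) ^ (k + 2) = (b * d) ^ (k + 3) * (b * e ^ 2 * d) := by
  obtain ⟨he, hcomm, -⟩ := he
  have hc : Commute A e := (hcomm A rfl).symm
  have hl := sq_mul_of_eq_mul_mul hc he
  have hr := mul_sq_of_eq_mul_mul hc he
  have hBe : d * b * e = A * e := calc
    d * b * e = d * b * A * e ^ 2 := by rw [mul_assoc (d * b), hr]
    _ = A * e := by rw [← hA, sq, mul_assoc, hr]
  have hBe2 : d * b * e ^ 2 = e := by rw [sq, ← mul_assoc, hBe, mul_assoc, ← sq, hr]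
  have heBd : e * (d * b) * d = e * A * d := calc
    e * (d * b) * d = e ^ 2 * A * (d * b) * d := by rw [hl]
    _ = e ^ 2 * (A * (d * b) * d) := by simp only [mul_assoc]
    _ = e ^ 2 * A * A * d := by rw [hBd, sq A]; simp only [mul_assoc]
    _ = e * A * d := by rw [hl]
  have hxf : b * d * (b * e ^ 2 * d) = b * e * d := by
    rw [show b * d * (b * e ^ 2 * d) = b * (d * b * e ^ 2) * d by simp only [mul_assoc], hBe2]
  have hfx : b * e ^ 2 * d * (b * d) = b * e * d := calc
    b * e ^ 2 * d * (b * d) = b * (e * (e * (d * b) * d)) := by rw [sq]; simp only [mul_assoc]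
    _ = b * e * d := by rw [heBd, ← mul_assoc e, ← mul_assoc e, ← sq, hl]; simp only [mul_assoc]
  have hxpow (n : ℕ) : (b * d) ^ (n + 2) = b * (A ^ n * (d * b)) * d := by
    rw [mul_pow_succ_eq_mul_pow_mul b d (n + 1), pow_succ_eq_pow_mul_of_sq_eq_mul hB]
  have hAkBd : A ^ k * (d * b) * d = A ^ (k + 1) * d := calc
    A ^ k * (d * b) * d = A ^ (k + 1) * (e * (d * b) * d) := by rw [hek]; simp only [mul_assoc]
    _ = A ^ (k + 1) * e * A * d := by rw [heBd]; simp only [mul_assoc]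
    _ = A ^ (k + 1) * d := by rw [← hek, ← pow_succ]
  have hek' : A ^ (k + 1) * A * e = A ^ (k + 1) := by
    rw [mul_assoc, hc.eq, ← mul_assoc, ← hek, ← pow_succ]
  have hidx : (b * d) ^ (k + 2) = (b * d) ^ (k + 3) * (b * e ^ 2 * d) := calc
    (b * d) ^ (k + 2) = b * (A ^ (k + 1) * d) := by rw [hxpow, ← hAkBd]; simp only [mul_assoc]
    _ = b * (A ^ (k + 1) * (A * e)) * d := by rw [← mul_assoc (A ^ (k + 1)), hek', mul_assoc b]
    _ = b * (A ^ (k + 1) * (d * b * (d * b * e ^ 2))) * d := by rw [hBe2, hBe]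
    _ = (b * d) ^ (k + 3) * (b * e ^ 2 * d) := by rw [hxpow (k + 1)]; simp only [mul_assoc]
  refine ⟨of_commute (m := k + 2) (hxf.trans hfx.symm) ?_ (by omega) hidx, hidx⟩
  rw [hfx, show b * e * d * (b * e ^ 2 * d) = b * e * (d * b * e ^ 2) * d by
    simp only [mul_assoc], hBe2, sq, mul_assoc b e e]

end IsDrazinInverse

theorem stmt_4 {R : Type*} [Ring R] (a b c d : R)
    (h1 : (a * c) ^ 2 = (d * b) * (a * c))
    (h2 : (d * b) ^ 2 = (a * c) * (d * b))
    (h3 : b * (a * c) * a = b * (d * b) * a)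
    (h4 : c * (a * c) * d = c * (d * b) * d) :
    ((∃ e, IsDrazinInverse (a * c) e) ↔ (∃ f, IsDrazinInverse (b * d) f)) ∧
    (∀ e, ∀ k : ℕ, 1 ≤ k → IsDrazinInverse (a * c) e →
      (a * c) ^ k = (a * c) ^ (k + 1) * e →
      IsDrazinInverse (b * d) (b * e ^ 2 * d) ∧
        (b * d) ^ (k + 2) = (b * d) ^ (k + 3) * (b * e ^ 2 * d)) := by
  have h4' : a * c * (d * b) * d = (a * c) ^ 2 * d := calc
    a * c * (d * b) * d = a * (c * (d * b) * d) := by simp only [mul_assoc]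
    _ = (a * c) ^ 2 * d := by rw [← h4, sq]; simp only [mul_assoc]
  have h3' : d * b * (a * c) * a = (d * b) ^ 2 * a := calc
    d * b * (a * c) * a = d * (b * (a * c) * a) := by simp only [mul_assoc]
    _ = (d * b) ^ 2 * a := by rw [h3, sq]; simp only [mul_assoc]
  refine ⟨⟨fun ⟨e, he⟩ => ?_, fun ⟨f, hf⟩ => ?_⟩,
    fun e _ _ he hek => he.mul_sq_mul b d h1 h2 h4' hek⟩
  · obtain ⟨k, -, hek⟩ := he.2.2
    exact ⟨_, (he.mul_sq_mul b d h1 h2 h4' hek).1⟩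
  · obtain ⟨k, -, hek⟩ := hf.cline.2.2
    exact ⟨_, (hf.cline.mul_sq_mul c a h2 h1 h3' hek).1.cline⟩
end

section
/- Let R be an associative ring with identity and let a, b, c ∈ R satisfy (aba)b = (aca)b, b(aba) = b(aca), (aba)c = (aca)c, and c(aba) = c(aca). Then ac has a Drazin inverse if and only if ba has a Drazin inverse. Moreover, if e is a Drazin inverse of ac with (ac)^k = (ac)^{k+1}·e for some natural number k ≥ 1, then b·e²·a is a Drazin inverse of ba satisfying (ba)^{k+1} = (ba)^{k+2}·(b·e²·a); in particular the Drazin index of ba is at most the Drazin index of ac plus 1. -/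
section DrazinAux

open MulOpposite

variable {R : Type*} [Ring R]

private lemma swapmul {p q : R} (h : p * q = q * p) (r : R) : p * (q * r) = q * (p * r) := by
  rw [← mul_assoc, h, mul_assoc]

private lemma idem_pow {p : R} (h : p * p = p) (n : ℕ) : p ^ (n+1) = p := by
  induction n with
  | zero => exact pow_one p
  | succ n ih => rw [pow_succ, ih, h]

private lemma commute_imp_double (x e : R) (hc : e * x = x * e) (he : e = e * x * e)
    (k : ℕ) (hk : 1 ≤ k) (hx : x ^ k = x ^ (k+1) * e) :
    ∀ y : R, y * x = x * y → e * y = y * e := by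
  obtain ⟨m, rfl⟩ : ∃ m, k = m + 1 := ⟨k - 1, (Nat.succ_pred_eq_of_pos hk).symm⟩
  set k := m + 1 with hkdef
  have he2 : x * e ^ 2 = e := by rw [pow_two, ← mul_assoc, ← hc, ← he]
  have he2' : e ^ 2 * x = e := by rw [pow_two, mul_assoc, hc, ← mul_assoc, ← he]
  have Cex : Commute e x := hc
  have hq : (x*e)*(x*e) = x*e := by
    calc (x*e)*(x*e) = x * ((e*x)*e) := by noncomm_ring
    _ = x * e := by rw [← he]
  have hq' : (e*x)*(e*x) = e*x := by
    calc (e*x)*(e*x) = (e*x*e) * x := by noncomm_ring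
    _ = e*x := by rw [← he]
  have hen : ∀ n : ℕ, x^n * e^(n+1) = e := by
    intro n
    induction n with
    | zero => simp
    | succ n ih =>
      have : x^(n+1) * e^(n+2) = x * ((x^n * e^(n+1)) * e) := by
        rw [pow_succ' x, pow_succ e]; simp only [mul_assoc]
      rw [this, ih, ← pow_two, he2]
  have hen' : ∀ n : ℕ, e^(n+1) * x^n = e := by
    intro n
    induction n with
    | zero => simp
    | succ n ih =>
      have : e^(n+2) * x^(n+1) = (e * (e^(n+1) * x^n)) * x := by
        rw [pow_succ x, pow_succ' e]; simp only [mul_assoc]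
      rw [this, ih, ← pow_two, he2']
  have hxj : ∀ j : ℕ, x^(k+j) * e^j = x^k := by
    intro j
    induction j with
    | zero => simp
    | succ j ih =>
      have key : x^(k+j+1) * e = x^(k+j) := by
        rw [show k+j+1 = j + (k+1) by omega, pow_add, mul_assoc, ← hx, ← pow_add,
          Nat.add_comm j k]
      calc x^(k+(j+1)) * e^(j+1) = (x^(k+j+1) * e) * e^j := by
            rw [show k+(j+1) = (k+j)+1 from rfl, pow_succ' e]; simp only [mul_assoc]
      _ = x^(k+j) * e^j := by rw [key]
      _ = x^k := ih
  intro y hy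
  have Cyx : Commute y x := hy
  have hyk : ∀ n : ℕ, y * x^n = x^n * y := fun n => Cyx.pow_right n
  have hexk : ∀ n : ℕ, e * x^n = x^n * e := fun n => Cex.pow_right n
  -- e * y = (e*x) * (y*e)
  have main1 : e * y = (e*x) * (y*e) := by
    calc e * y = (e^(k+1) * x^k) * y := by rw [hen' k]
    _ = e^(k+1) * (y * x^k) := by rw [mul_assoc, hyk k]
    _ = e^(k+1) * (y * (x^(k+k) * e^k)) := by rw [hxj k]
    _ = e^(k+1) * (x^(k+k) * (y * e^k)) := by rw [swapmul (hyk (k+k))]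
    _ = (e^(k+1) * x^(k+1)) * (x^m * (y * e^k)) := by
          rw [show k+k = (k+1)+m by omega]; simp only [pow_add, mul_assoc]
    _ = (e*x) * (x^m * (y * e^k)) := by rw [← Cex.mul_pow, idem_pow hq' k]
    _ = e * (x^k * (y * e^k)) := by
          rw [show (k:ℕ) = m+1 from rfl, pow_succ' x]; simp only [mul_assoc]
    _ = e * (y * (x^k * e^k)) := by rw [swapmul (hyk k)]
    _ = e * (y * (x*e)^k) := by rw [(Cex.symm).mul_pow k]
    _ = e * (y * (x*e)) := by rw [idem_pow hq m]
    _ = (e*x) * (y*e) := by rw [swapmul hy e]; simp only [mul_assoc]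
  have main2 : y * e = (e*x) * (y*e) := by
    calc y * e = y * (x^k * e^(k+1)) := by rw [hen k]
    _ = x^k * (y * e^(k+1)) := by rw [swapmul (hyk k)]
    _ = (x^(k+1) * e) * (y * e^(k+1)) := by rw [← hx]
    _ = (x*e) * (x^k * (y * e^(k+1))) := by
          rw [pow_succ' x, mul_assoc x (x^k) e, ← hexk k]; simp only [mul_assoc]
    _ = (x*e) * (y * (x^k * e^(k+1))) := by rw [swapmul (hyk k)]
    _ = (x*e) * (y * e) := by rw [hen k]
    _ = (e*x) * (y*e) := by rw [hc]
  rw [main1, ← main2]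

private lemma fwd (a b c e : R)
    (h2 : b * (a * b * a) = b * (a * c * a))
    (h3 : (a * b * a) * c = (a * c * a) * c)
    (h4 : c * (a * b * a) = c * (a * c * a))
    (k : ℕ) (hk : 1 ≤ k)
    (hce : e * (a*c) = (a*c) * e) (he : e = e * (a*c) * e)
    (hpow : (a*c)^k = (a*c)^(k+1) * e) :
    IsDrazinInverse (b*a) (b * e^2 * a) ∧ (b*a)^(k+1) = (b*a)^(k+2) * (b * e^2 * a) := by
  obtain ⟨m, rfl⟩ : ∃ m, k = m + 1 := ⟨k - 1, (Nat.succ_pred_eq_of_pos hk).symm⟩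
  simp only [mul_assoc] at h2 h3 h4
  set X := a * c with hX
  have hxe2 : X * e ^ 2 = e := by rw [pow_two, ← mul_assoc, ← hce, ← he]
  have he2x : e ^ 2 * X = e := by rw [pow_two, mul_assoc, hce, ← mul_assoc, ← he]
  have step1 : e ^ 2 = X * (e ^ 2 * e) := by
    rw [← mul_assoc, hxe2, ← pow_two]
  have step2 : e ^ 2 = e * (e ^ 2 * X) := by
    rw [he2x, ← pow_two]
  have k3 : ∀ s : R, a * (b * (X * s)) = X * (X * s) := by
    intro s
    have := congrArg (· * s) h3
    simpa only [mul_assoc, hX] using this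
  have q1 : X * (a * (b * a)) = X * (X * a) := by
    calc X * (a * (b * a)) = a * (c * (a * (b * a))) := by rw [hX]; simp only [mul_assoc]
    _ = a * (c * (a * (c * a))) := by rw [h4]
    _ = X * (X * a) := by rw [hX]; simp only [mul_assoc]
  have Q : ∀ n : ℕ, X^(n+1) * (a * (b * a)) = X^(n+2) * a := by
    intro n
    calc X^(n+1) * (a * (b * a)) = X^n * (X * (a * (b * a))) := by
          rw [pow_succ]; simp only [mul_assoc]
    _ = X^n * (X * (X * a)) := by rw [q1]
    _ = X^(n+2) * a := by
          rw [show n+2 = n+1+1 from rfl, pow_succ, pow_succ]; simp only [mul_assoc]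
  have P : ∀ n : ℕ, (b*a)^(n+2) = b * (X^(n+1) * a) := by
    intro n
    induction n with
    | zero =>
      calc (b*a)^2 = b * (a * (b * a)) := by rw [pow_two]; simp only [mul_assoc]
      _ = b * (a * (c * a)) := by rw [h2]
      _ = b * (X^1 * a) := by rw [pow_one, hX]; simp only [mul_assoc]
    | succ n ih =>
      calc (b*a)^(n+3) = (b*a)^(n+2) * (b*a) := by rw [pow_succ]
      _ = b * (X^(n+1) * (a * (b * a))) := by rw [ih]; simp only [mul_assoc]
      _ = b * (X^(n+2) * a) := by rw [Q]
  have F6 : ∀ r : R, a * (b * (e^2 * r)) = e * r := by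
    intro r
    calc a * (b * (e^2 * r)) = a * (b * (X * (e^2 * (e * r)))) := by
          conv_lhs => rw [step1]
          simp only [mul_assoc]
    _ = X * (X * (e^2 * (e * r))) := k3 _
    _ = X * (e * (e * r)) := by rw [← mul_assoc X (e^2), hxe2]
    _ = X * (e^2 * r) := by rw [← mul_assoc e e, ← pow_two]
    _ = e * r := by rw [← mul_assoc, hxe2]
  have F5 : e^2 * (a * (b * a)) = e * a := by
    calc e^2 * (a * (b * a)) = e * (e^2 * (X * (a * (b * a)))) := by
          conv_lhs => rw [step2]
          simp only [mul_assoc]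
    _ = e * (e^2 * (X * (X * a))) := by rw [q1]
    _ = e * (e * (X * a)) := by rw [← mul_assoc (e^2) X, he2x]
    _ = (e^2 * X) * a := by rw [pow_two]; simp only [mul_assoc]
    _ = e * a := by rw [he2x]
  set f := b * e^2 * a with hf
  have fba : f * (b*a) = b * (e * a) := by
    calc f * (b*a) = b * (e^2 * (a * (b * a))) := by rw [hf]; simp only [mul_assoc]
    _ = b * (e * a) := by rw [F5]
  have baf : (b*a) * f = b * (e * a) := by
    calc (b*a) * f = b * (a * (b * (e^2 * a))) := by rw [hf]; simp only [mul_assoc]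
    _ = b * (e * a) := by rw [F6]
  have comm : f * (b*a) = (b*a) * f := by rw [fba, baf]
  have hee : f * (b*a) * f = f := by
    calc f * (b*a) * f = (b * (e * a)) * f := by rw [fba]
    _ = b * (e * (a * (b * (e^2 * a)))) := by rw [hf]; simp only [mul_assoc]
    _ = b * (e * (e * a)) := by rw [F6]
    _ = f := by rw [hf, pow_two]; simp only [mul_assoc]
  have powid : (b*a)^(m+1+1) = (b*a)^(m+1+2) * f := by
    have := P (m+1)
    calc (b*a)^(m+1+1) = b * (X^(m+1) * a) := P m
    _ = b * ((X^(m+1+1) * e) * a) := by rw [← hpow]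
    _ = b * (X^(m+1+1) * (e * a)) := by simp only [mul_assoc]
    _ = b * (X^(m+1+1) * (a * (b * (e^2 * a)))) := by rw [F6]
    _ = (b * (X^(m+1+1) * a)) * (b * (e^2 * a)) := by simp only [mul_assoc]
    _ = (b*a)^(m+1+2) * f := by rw [hf, ← P (m+1)]; simp only [mul_assoc]
  have hdc := commute_imp_double (b*a) f comm hee.symm (m+2) (by omega)
    (by rw [show m+2 = m+1+1 from rfl, show m+2+1 = m+1+2 from rfl]; exact powid)
  exact ⟨⟨hee.symm, hdc, ⟨m+2, by omega,
    by rw [show m+2 = m+1+1 from rfl, show m+2+1 = m+1+2 from rfl]; exact powid⟩⟩, powid⟩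

private lemma of_op {x e : R} (h : IsDrazinInverse (op x) (op e)) : IsDrazinInverse x e := by
  obtain ⟨h1, h2, k, hk, h3⟩ := h
  have hcomm : x * e = e * x := by
    have h' : op (x * e) = op (e * x) := h2 (op x) rfl
    exact op_injective h'
  refine ⟨?_, ?_, k, hk, ?_⟩
  · have h1' : op e = op (e * (x * e)) := h1
    have h1'' := op_injective h1'
    rw [← mul_assoc] at h1''
    exact h1''
  · intro y hy
    have hyop : op y * op x = op x * op y := congrArg op hy.symm
    have h' : op (y * e) = op (e * y) := h2 (op y) hyop
    exact (op_injective h').symm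
  · have h3' : op (x ^ k) = op (e * x ^ (k+1)) := by
      calc op (x ^ k) = (op x) ^ k := (op_pow x k).symm
      _ = (op x) ^ (k+1) * op e := h3
      _ = op (e * x ^ (k+1)) := by rw [← op_pow, ← op_mul]
    have hk1 := op_injective h3'
    have Cex : Commute e x := hcomm.symm
    rw [hk1, (Cex.pow_right (k+1) : e * x ^ (k+1) = x ^ (k+1) * e)]

end DrazinAux

theorem stmt_5 {R : Type*} [Ring R] (a b c : R)
    (h1 : (a * b * a) * b = (a * c * a) * b)
    (h2 : b * (a * b * a) = b * (a * c * a))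
    (h3 : (a * b * a) * c = (a * c * a) * c)
    (h4 : c * (a * b * a) = c * (a * c * a)) :
    ((∃ e, IsDrazinInverse (a * c) e) ↔ (∃ f, IsDrazinInverse (b * a) f)) ∧
    (∀ e, ∀ k : ℕ, 1 ≤ k → IsDrazinInverse (a * c) e →
      (a * c) ^ k = (a * c) ^ (k + 1) * e →
      IsDrazinInverse (b * a) (b * e ^ 2 * a) ∧
        (b * a) ^ (k + 1) = (b * a) ^ (k + 2) * (b * e ^ 2 * a)) := by
  open MulOpposite in
  constructor
  · constructor
    · rintro ⟨e, hD⟩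
      obtain ⟨k, hk, hpow⟩ := hD.2.2
      exact ⟨_, (fwd a b c e h2 h3 h4 k hk (hD.2.1 (a*c) rfl) hD.1 hpow).1⟩
    · rintro ⟨f, hf⟩
      obtain ⟨k, hk, hpow⟩ := hf.2.2
      have hcomm : f * (b*a) = (b*a) * f := hf.2.1 (b*a) rfl
      have Cf : Commute f (b*a) := hcomm
      have h1n := h1; have h2n := h2; have h3n := h3; have h4n := h4
      simp only [mul_assoc] at h1n h2n h3n h4n
      have hf1 := hf.1
      have H2 : (op c) * ((op a) * (op c) * (op a)) = (op c) * ((op a) * (op b) * (op a)) := by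
        apply unop_injective
        simp only [unop_mul, unop_op, mul_assoc]
        exact h3n.symm
      have H3 : ((op a) * (op c) * (op a)) * (op b) = ((op a) * (op b) * (op a)) * (op b) := by
        apply unop_injective
        simp only [unop_mul, unop_op, mul_assoc]
        exact h2n.symm
      have H4 : (op b) * ((op a) * (op c) * (op a)) = (op b) * ((op a) * (op b) * (op a)) := by
        apply unop_injective
        simp only [unop_mul, unop_op, mul_assoc]
        exact h1n.symm
      have HCE : op f * (op a * op b) = (op a * op b) * op f := by
        apply unop_injective
        simp only [unop_mul, unop_op, mul_assoc]
        exact (mul_assoc b a f).symm.trans hcomm.symm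
      have HE : op f = op f * (op a * op b) * op f := by
        apply unop_injective
        simp only [unop_mul, unop_op, mul_assoc]
        simpa only [mul_assoc] using hf1
      have HPOW : (op a * op b) ^ k = (op a * op b) ^ (k+1) * op f := by
        apply unop_injective
        simp only [unop_mul, unop_pow, unop_op]
        have : f * (b*a) ^ (k+1) = (b*a) ^ (k+1) * f := Cf.pow_right (k+1)
        rw [this]
        exact hpow
      have key := (fwd (op a) (op c) (op b) (op f) H2 H3 H4 k hk HCE HE HPOW).1
      have hrw : op c * (op f) ^ 2 * op a = op (a * (f ^ 2 * c)) := by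
        apply unop_injective
        simp only [unop_mul, unop_pow, unop_op, mul_assoc]
      have hrw2 : op c * op a = op (a * c) := rfl
      rw [hrw, hrw2] at key
      exact ⟨_, of_op key⟩
  · intro e k hk hD hpow
    exact fwd a b c e h2 h3 h4 k hk (hD.2.1 (a*c) rfl) hD.1 hpow
end

section
/- Let R be an associative ring with identity and let a, b, c ∈ R satisfy (aba)b = (aca)b, b(aba) = b(aca), (aba)c = (aca)c, and c(aba) = c(aca). If ac has a group inverse, then (ba)² has a group inverse, and moreover, if g is the group inverse of (ba)², then a·g·c is the group inverse of ac. -/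
set_option maxHeartbeats 1000000 in
theorem group_inverse_unique' {R : Type*} [Ring R] {x g1 g2 : R}
    (m1 : x * g1 = g1 * x) (e1 : x = x * g1 * x) (i1 : g1 = g1 * x * g1)
    (m2 : x * g2 = g2 * x) (e2 : x = x * g2 * x) (i2 : g2 = g2 * x * g2) :
    g1 = g2 := by
  linear_combination (norm := noncomm_ring) - e1 * (g2 * g2) + i1 - i1 * (g2 * x) - i2 - m1 * (g2) + m2 * (g2) + (g1) * m1 - (g1) * m1 * (g2 * x) - (g1) * m2 + (g1 * g1) * e2 + (x * g1) * i2 - (x * g1) * m2 * (g2)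

/-- `g` is a group inverse of `a`. -/
def IsGroupInverse {R : Type*} [Ring R] (a g : R) : Prop :=
  a * g = g * a ∧ a = a * g * a ∧ g = g * a * g

set_option maxHeartbeats 1000000 in
theorem stmt_6 {R : Type*} [Ring R] (a b c : R)
    (h1 : (a * b * a) * b = (a * c * a) * b)
    (h2 : b * (a * b * a) = b * (a * c * a))
    (h3 : (a * b * a) * c = (a * c * a) * c)
    (h4 : c * (a * b * a) = c * (a * c * a))
    (hac : ∃ g, IsGroupInverse (a * c) g) :
    (∃ g, IsGroupInverse ((b * a) ^ 2) g) ∧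
    (∀ g, IsGroupInverse ((b * a) ^ 2) g →
      IsGroupInverse (a * c) (a * g * c)) := by
  obtain ⟨k, hc1, hc2, hc3⟩ := hac
  have LA : k * k * a * c = k := by
    linear_combination (norm := noncomm_ring) -hc3 - (k) * hc1
  have LB : a * c * k * k = k := by
    linear_combination (norm := noncomm_ring) hc1 * (k) - hc3
  have LC : a * c * a * c * k = a * c := by
    linear_combination (norm := noncomm_ring) -hc2 + (a * c) * hc1
  have LD : k * a * c * a * c = a * c := by
    linear_combination (norm := noncomm_ring) -hc1 * (a * c) - hc2
  have LE : a * b * k * k = k := by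
    linear_combination (norm := noncomm_ring) LB + LC * (k * k) + h3 * (k * k * k) - (a * b) * LB * (k) + (a * b * a * c) * LA * (k * k) - (a * b * a * c * k * k) * LB
  have LF : k * k * a * b * a = k * a := by
    linear_combination (norm := noncomm_ring) LA * (a) - (k) * LA * (a * b * a) + (k * k) * LD * (a) + (k * k * k * a) * h4
  have LG : a * b * k * a = k * a * c * a := by
    linear_combination (norm := noncomm_ring) LC * (k * a) + h3 * (k * k * a) + hc1 * (a) - (a * b) * LB * (a)
  have P1 : b * a * b * a * b * k * k * k * a = b * k * a := by
    linear_combination (norm := noncomm_ring) (b) * LE * (a) + (b * a * b) * LE * (k * a)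
  have P2 : b * k * k * k * a * b * a * b * a = b * k * a := by
    linear_combination (norm := noncomm_ring) (b) * LF + (b * k) * LF * (b * a)
  have P3 : b * k * a * b * a * b * a = b * a * b * a := by
    linear_combination (norm := noncomm_ring) -h2 + (b) * LD * (a) + (b * k) * h1 * (a) + (b * k * a) * h4
  have P5 : b * k * a * b * k * k * k * a = b * k * k * k * a := by
    linear_combination (norm := noncomm_ring) (b * k) * LE * (k * a)
  have G4 : a * b * k * k * k * a * c = k := by
    linear_combination (norm := noncomm_ring) LE + (a * b * k) * LA
  have G1 : (b * a) ^ 2 * (b * k * k * k * a) = (b * k * k * k * a) * (b * a) ^ 2 := by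
    linear_combination (norm := noncomm_ring) P1 - P2
  have G2 : (b * a) ^ 2 = (b * a) ^ 2 * (b * k * k * k * a) * (b * a) ^ 2 := by
    linear_combination (norm := noncomm_ring) - P1 * (b * a * b * a) - P3
  have G3 : b * k * k * k * a = (b * k * k * k * a) * (b * a) ^ 2 * (b * k * k * k * a) := by
    linear_combination (norm := noncomm_ring) - P2 * (b * k * k * k * a) - P5
  have hgi : IsGroupInverse ((b * a) ^ 2) (b * k * k * k * a) := ⟨G1, G2, G3⟩
  refine ⟨⟨_, hgi⟩, ?_⟩
  intro g hg
  obtain ⟨m1, e1, i1⟩ := hg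
  have hgeq : g = b * k * k * k * a := group_inverse_unique' m1 e1 i1 G1 G2 G3
  have hkey : a * g * c = k := by
    rw [hgeq]; linear_combination (norm := noncomm_ring) G4
  rw [hkey]
  exact ⟨hc1, hc2, hc3⟩
end

section
/- Let A be a complex Banach algebra with identity and let a, b, c ∈ A satisfy a·b·a = a·c·a. If ac has a group inverse, then (ba)² has a group inverse, and moreover, if g is the group inverse of (ba)², then a·g·c is the group inverse of ac. -/
private lemma gi_unique {R : Type*} [Ring R] {x g g' : R}
    (h1 : IsGroupInverse x g) (h2 : IsGroupInverse x g') : g = g' := by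
  obtain ⟨c1, r1, r1'⟩ := h1
  obtain ⟨c2, r2, r2'⟩ := h2
  have hp : x * g = x * g' := by
    have e1 : (x * g) * (x * g') = x * g' := by
      calc (x * g) * (x * g') = (x * g * x) * g' := by noncomm_ring
        _ = x * g' := by rw [← r1]
    have e2 : (x * g) * (x * g') = x * g := by
      calc (x * g) * (x * g') = (g * x) * (g' * x) := by rw [← c1, ← c2]
        _ = g * (x * g' * x) := by noncomm_ring
        _ = g * x := by rw [← r2]
        _ = x * g := c1.symm
    rw [← e1, e2]
  calc g = g * x * g := r1'
    _ = g * x * g' := by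
        have : g * x * g = g * (x * g) := by noncomm_ring
        rw [this, hp]; noncomm_ring
    _ = x * g * g' := by rw [← c1]
    _ = x * g' * g' := by
        have : x * g * g' = (x * g) * g' := by noncomm_ring
        rw [this, hp]
    _ = g' * x * g' := by rw [c2]
    _ = g' := r2'.symm

theorem stmt_7 {A : Type*} [NormedRing A] [NormedAlgebra ℂ A] [CompleteSpace A]
    (a b c : A) (h : a * b * a = a * c * a)
    (hac : ∃ g, IsGroupInverse (a * c) g) :
    (∃ g, IsGroupInverse ((b * a) ^ 2) g) ∧
    (∀ g, IsGroupInverse ((b * a) ^ 2) g →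
      IsGroupInverse (a * c) (a * g * c)) := by
  obtain ⟨e, hge⟩ := hac
  obtain ⟨hce, he1, he2⟩ := hge
  -- hce : a*c*e = e*(a*c), he1 : a*c = a*c*e*(a*c), he2 : e = e*(a*c)*e
  have hF : a * c * (e * e) = e := by
    calc a * c * (e * e) = a * c * e * e := by noncomm_ring
      _ = e * (a * c) * e := by rw [hce]
      _ = e := he2.symm
  have heq : e * (e * (a * c)) = e := by
    calc e * (e * (a * c)) = e * (a * c * e) := by rw [← hce]
      _ = e * (a * c) * e := by noncomm_ring
      _ = e := he2.symm
  have T1 : (b * a) ^ 2 * (b * (e * e * e) * a) = b * e * a := by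
    calc (b * a) ^ 2 * (b * (e * e * e) * a)
        = b * a * b * a * b * (e * (e * e)) * a := by noncomm_ring
      _ = b * a * b * a * b * (a * c * (e * e) * (e * e)) * a := by rw [hF]
      _ = b * (a * b * a) * (b * (a * c * (e * e) * (e * e))) * a := by noncomm_ring
      _ = b * (a * c * a) * (b * (a * c * (e * e) * (e * e))) * a := by rw [h]
      _ = b * (a * c) * (a * b * a) * (c * (e * e) * (e * e)) * a := by noncomm_ring
      _ = b * (a * c) * (a * c * a) * (c * (e * e) * (e * e)) * a := by rw [h]
      _ = b * ((a * c) * ((a * c) * ((a * c) * (e * e)) * (e * e))) * a := by noncomm_ring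
      _ = b * ((a * c) * (a * c * e * (e * e))) * a := by rw [hF]
      _ = b * ((a * c) * ((a * c) * (e * e)) * e) * a := by noncomm_ring
      _ = b * (a * c * e * e) * a := by rw [hF]
      _ = b * ((a * c) * (e * e)) * a := by noncomm_ring
      _ = b * e * a := by rw [hF]
  have T2 : (b * (e * e * e) * a) * (b * a) ^ 2 = b * e * a := by
    calc (b * (e * e * e) * a) * (b * a) ^ 2
        = b * (e * e * e) * (a * b * a) * (b * a) := by noncomm_ring
      _ = b * (e * e * e) * (a * c * a) * (b * a) := by rw [h]
      _ = b * (e * e * e) * (a * c) * (a * b * a) := by noncomm_ring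
      _ = b * (e * e * e) * (a * c) * (a * c * a) := by rw [h]
      _ = b * (e * ((e * (e * (a * c))) * (a * c))) * a := by noncomm_ring
      _ = b * e * a := by rw [heq, heq]
  have T3 : (b * e * a) * (b * a) ^ 2 = (b * a) ^ 2 := by
    calc (b * e * a) * (b * a) ^ 2
        = b * e * (a * b * a) * (b * a) := by noncomm_ring
      _ = b * e * (a * c * a) * (b * a) := by rw [h]
      _ = b * e * (a * c) * (a * b * a) := by noncomm_ring
      _ = b * e * (a * c) * (a * c * a) := by rw [h]
      _ = b * (e * (a * c) * (a * c)) * a := by noncomm_ring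
      _ = b * (a * c * e * (a * c)) * a := by rw [← hce]
      _ = b * (a * c) * a := by rw [← he1]
      _ = b * (a * c * a) := by noncomm_ring
      _ = b * (a * b * a) := by rw [← h]
      _ = (b * a) ^ 2 := by noncomm_ring
  have T4 : (b * e * a) * (b * (e * e * e) * a) = b * (e * e * e) * a := by
    calc (b * e * a) * (b * (e * e * e) * a)
        = b * e * (a * (b * (e * (e * e)))) * a := by noncomm_ring
      _ = b * e * (a * (b * (a * c * (e * e) * (e * e)))) * a := by rw [hF]
      _ = b * e * (a * b * a) * (c * (e * e) * (e * e)) * a := by noncomm_ring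
      _ = b * e * (a * c * a) * (c * (e * e) * (e * e)) * a := by rw [h]
      _ = b * (e * (a * c)) * ((a * c) * (e * (e * (e * e)))) * a := by noncomm_ring
      _ = b * (a * c * e) * ((a * c) * (e * (e * (e * e)))) * a := by rw [← hce]
      _ = b * (a * c) * (e * (a * c)) * (e * (e * (e * e))) * a := by noncomm_ring
      _ = b * (a * c) * (a * c * e) * (e * (e * (e * e))) * a := by rw [← hce]
      _ = b * ((a * c) * ((a * c) * (e * e)) * (e * (e * e))) * a := by noncomm_ring
      _ = b * ((a * c) * e * (e * (e * e))) * a := by rw [hF]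
      _ = b * ((a * c) * (e * e) * (e * e)) * a := by noncomm_ring
      _ = b * (e * (e * e)) * a := by rw [hF]
      _ = b * (e * e * e) * a := by noncomm_ring
  have T5 : a * (b * (e * e * e) * a) * c = e := by
    calc a * (b * (e * e * e) * a) * c
        = a * b * (e * (e * e)) * (a * c) := by noncomm_ring
      _ = a * b * (a * c * (e * e) * (e * e)) * (a * c) := by rw [hF]
      _ = (a * b * a) * (c * (e * e) * (e * e)) * (a * c) := by noncomm_ring
      _ = (a * c * a) * (c * (e * e) * (e * e)) * (a * c) := by rw [h]
      _ = (a * c) * ((a * c) * (e * e)) * ((e * e) * (a * c)) := by noncomm_ring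
      _ = (a * c) * e * ((e * e) * (a * c)) := by rw [hF]
      _ = (a * c) * (e * e) * (e * (a * c)) := by noncomm_ring
      _ = e * (e * (a * c)) := by rw [hF]
      _ = e := by rw [heq]
  have hg0 : IsGroupInverse ((b * a) ^ 2) (b * (e * e * e) * a) := by
    refine ⟨?_, ?_, ?_⟩
    · rw [T1, T2]
    · rw [T1, T3]
    · rw [T2, T4]
  refine ⟨⟨_, hg0⟩, ?_⟩
  intro g hg
  have hgg : g = b * (e * e * e) * a := gi_unique hg hg0
  rw [hgg, T5]
  exact ⟨hce, he1, he2⟩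
end

section
/- Let R be an associative ring with identity and let a, b, c, d ∈ R satisfy (ac)² = (db)(ac), (db)² = (ac)(db), b(ac)a = b(db)a, and c(ac)d = c(db)d. Then 1 − ac is a unit of R if and only if 1 − bd is a unit of R. Moreover, if s denotes the inverse of 1 − ac, then the inverse of 1 − bd equals (1 − b·s·(acd − dbd))·(1 + b·s·d). -/
private lemma jac_aux {R : Type*} [Ring R] (x y : R) (h : IsUnit (1 - x * y)) :
    IsUnit (1 - y * x) := by
  obtain ⟨v, hv1, hv2⟩ := isUnit_iff_exists.mp h
  refine isUnit_iff_exists.mpr ⟨1 + y * v * x, ?_, ?_⟩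
  · linear_combination (norm := noncomm_ring) y * hv1 * x
  · linear_combination (norm := noncomm_ring) y * hv2 * x

private lemma key_aux {R : Type*} [Ring R] (a b c d s : R)
    (h1 : (a * c) ^ 2 = (d * b) * (a * c))
    (h2 : (d * b) ^ 2 = (a * c) * (d * b))
    (hs1 : (1 - a * c) * s = 1) (hs2 : s * (1 - a * c) = 1) :
    (1 - b * d) * ((1 - b * s * (a * c * d - d * b * d)) * (1 + b * s * d)) = 1 ∧
    ((1 - b * s * (a * c * d - d * b * d)) * (1 + b * s * d)) * (1 - b * d) = 1 := by
  constructor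
  · linear_combination (norm := noncomm_ring)
      b * hs2 * d - b * d * b * hs2 * d + b * s * h2 * (s * d)
      - b * d * b * s * h2 * (s * d)
      + (b * (1 + a * c - d * b)) * hs1 * (d * b * d)
      + b * h1 * (s * (d * b * d)) - b * h2 * d
  · linear_combination (norm := noncomm_ring)
      b * hs2 * d - b * s * h2 * d + b * s * h2 * (s * d)
      - b * s * h2 * (s * d * b * d)

theorem stmt_13 {R : Type*} [Ring R] (a b c d : R)
    (h1 : (a * c) ^ 2 = (d * b) * (a * c))
    (h2 : (d * b) ^ 2 = (a * c) * (d * b))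
    (h3 : b * (a * c) * a = b * (d * b) * a)
    (h4 : c * (a * c) * d = c * (d * b) * d) :
    (IsUnit (1 - a * c) ↔ IsUnit (1 - b * d)) ∧
    (∀ s : R, (1 - a * c) * s = 1 → s * (1 - a * c) = 1 →
      (1 - b * d) * ((1 - b * s * (a * c * d - d * b * d)) * (1 + b * s * d)) = 1 ∧
      ((1 - b * s * (a * c * d - d * b * d)) * (1 + b * s * d)) * (1 - b * d) = 1) := by
  constructor
  · constructor
    · intro h
      obtain ⟨v, hv1, hv2⟩ := isUnit_iff_exists.mp h
      exact isUnit_iff_exists.mpr ⟨_, key_aux a b c d v h1 h2 hv1 hv2⟩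
    · intro h
      have h' : IsUnit (1 - d * b) := jac_aux b d h
      obtain ⟨v, hv1, hv2⟩ := isUnit_iff_exists.mp h'
      have hca : IsUnit (1 - c * a) :=
        isUnit_iff_exists.mpr ⟨_, key_aux d c b a v h2 h1 hv1 hv2⟩
      exact jac_aux c a hca
  · intro s hs1 hs2
    exact key_aux a b c d s h1 h2 hs1 hs2
end

section
/- Let X be a complex Banach space and let A, B, C, D be bounded linear operators on X satisfying (AC)² = (DB)(AC), (DB)² = (AC)(DB), B(AC)A = B(DB)A, and C(AC)D = C(DB)D. Then the g-Drazin spectrum of BD equals the g-Drazin spectrum of AC, i.e., {λ ∈ ℂ : λI − BD has no g-Drazin inverse} = {λ ∈ ℂ : λI − AC has no g-Drazin inverse}. -/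
/-- An element of a complex Banach algebra is quasinilpotent if its
spectral radius is zero. -/
def IsQuasinilpotentB {A : Type*} [NormedRing A] [NormedAlgebra ℂ A] (q : A) : Prop :=
  spectralRadius ℂ q = 0

/-- `e` is a g-Drazin inverse of `a`. -/
def IsGDrazinInverseB {A : Type*} [NormedRing A] [NormedAlgebra ℂ A] (a e : A) : Prop :=
  e = e * a * e ∧ (∀ y : A, y * a = a * y → e * y = y * e) ∧
    IsQuasinilpotentB (a - a ^ 2 * e)

/-- The g-Drazin spectrum. -/
def gDrazinSpectrum {A : Type*} [NormedRing A] [NormedAlgebra ℂ A] (t : A) : Set ℂ :=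
  {lam : ℂ | ¬ ∃ e, IsGDrazinInverseB (lam • (1 : A) - t) e}


/-!
It suffices to find an `e` with `e a e = e`, `a e = e a` and `a (1 - a e)` quasinilpotent: that `e`
then commutes with everything commuting with `a`, by Gelfand's formula. Such weak inverses transfer
by explicit formulas: Cline's formula between `ab` and `ba`, Jacobson's lemma between `1 - ab` and
`1 - ba`, and a perturbation formula for `Q + N` when `N Q = 0` and `N² = 0`. With `N = AC - DB`
the hypotheses say exactly `N (DB) = 0` and `N² = 0`, hence
`σ_d(BD) = σ_d(DB) = σ_d(DB + N) = σ_d(AC)`.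
-/

open Filter Topology

section

variable {R : Type*} [NormedRing R] [NormedAlgebra ℂ R]

theorem isQuasinilpotentB_iff_spectrum_subset {x : R} :
    IsQuasinilpotentB x ↔ spectrum ℂ x ⊆ {0} := by
  simp only [IsQuasinilpotentB, spectralRadius, ENNReal.iSup_eq_zero, ENNReal.coe_eq_zero,
    nnnorm_eq_zero, Set.subset_def, Set.mem_singleton_iff]

namespace IsQuasinilpotentB

variable {x y : R}

theorem isUnit_sub (hx : IsQuasinilpotentB x) {μ : ℂ} (hμ : μ ≠ 0) :
    IsUnit (algebraMap ℂ R μ - x) :=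
  spectrum.notMem_iff.mp fun hmem => hμ (isQuasinilpotentB_iff_spectrum_subset.mp hx hmem)

theorem isUnit_one_sub (hx : IsQuasinilpotentB x) : IsUnit (1 - x) := by
  simpa using hx.isUnit_sub one_ne_zero

theorem mul_comm {a b : R} (h : IsQuasinilpotentB (a * b)) : IsQuasinilpotentB (b * a) := by
  rw [isQuasinilpotentB_iff_spectrum_subset] at h ⊢
  intro μ hμ
  by_contra hne
  have : μ ∈ spectrum ℂ (a * b) \ {0} := by rw [spectrum.nonzero_mul_comm]; exact ⟨hμ, hne⟩
  exact this.2 (h this.1)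

theorem smul (hx : IsQuasinilpotentB x) {c : ℂ} (hc : c ≠ 0) : IsQuasinilpotentB (c • x) := by
  rw [isQuasinilpotentB_iff_spectrum_subset] at hx ⊢
  rw [show c • x = Units.mk0 c hc • x from rfl, spectrum.unit_smul_eq_smul]
  exact (Set.smul_set_mono hx).trans (by simp)

theorem add_of_mul_eq_zero (hx : IsQuasinilpotentB x) (hyx : y * x = 0) (hyy : y * y = 0) :
    IsQuasinilpotentB (x + y) := by
  rw [isQuasinilpotentB_iff_spectrum_subset]
  intro μ hμ
  by_contra hne
  have hnil : IsNilpotent (μ⁻¹ • y) := ⟨2, by rw [sq, smul_mul_smul, hyy, smul_zero]⟩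
  have hfac : algebraMap ℂ R μ - (x + y) = (1 - μ⁻¹ • y) * (algebraMap ℂ R μ - x) := by
    rw [Algebra.algebraMap_eq_smul_one, sub_mul, one_mul, mul_sub, smul_mul_smul, mul_one,
      smul_mul_assoc, hyx, smul_zero, inv_mul_cancel₀ hne, one_smul]
    abel
  exact spectrum.mem_iff.mp hμ (hfac ▸ hnil.isUnit_one_sub.mul (hx.isUnit_sub hne))

end IsQuasinilpotentB

structure IsWeakGDrazinInverse (a e : R) : Prop where
  mul_mul_eq : e * a * e = e
  commute : Commute a e
  quasinilpotent : IsQuasinilpotentB (a * (1 - a * e))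

namespace IsWeakGDrazinInverse

variable {a b e N : R}

theorem mul_mul_self_eq (h : IsWeakGDrazinInverse a e) : a * e * e = e := by
  rw [h.commute.eq, h.mul_mul_eq]

theorem isIdempotentElem (h : IsWeakGDrazinInverse a e) : IsIdempotentElem (a * e) := by
  rw [IsIdempotentElem, mul_assoc, ← mul_assoc e a e, h.mul_mul_eq]

theorem commute_one_sub (h : IsWeakGDrazinInverse a e) : Commute a (1 - a * e) :=
  (Commute.one_right a).sub_right ((Commute.refl a).mul_right h.commute)

theorem one_sub_mul_mul_eq_zero (h : IsWeakGDrazinInverse a e) : (1 - a * e) * e = 0 := by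
  rw [sub_mul, one_mul, h.mul_mul_self_eq, sub_self]

theorem smul (h : IsWeakGDrazinInverse a e) {c : ℂ} (hc : c ≠ 0) :
    IsWeakGDrazinInverse (c • a) (c⁻¹ • e) where
  mul_mul_eq := by
    rw [smul_mul_smul, smul_mul_smul, inv_mul_cancel₀ hc, one_mul, h.mul_mul_eq]
  commute := (h.commute.smul_left c).smul_right c⁻¹
  quasinilpotent := by
    rw [smul_mul_smul, mul_inv_cancel₀ hc, one_smul, smul_mul_assoc]
    exact h.quasinilpotent.smul hc

theorem neg (h : IsWeakGDrazinInverse a e) : IsWeakGDrazinInverse (-a) (-e) := by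
  simpa using h.smul (neg_ne_zero.mpr one_ne_zero)

/-- `X` inverts `1 - a` on the corner cut out by the spectral idempotent `1 - a * e`, on which `a`
is quasinilpotent. -/
theorem exists_corner_inverse (h : IsWeakGDrazinInverse a e) :
    ∃ X : R, (1 - a) * X = 1 - a * e ∧ X * (1 - a) = 1 - a * e ∧ (1 - a * e) * X = X := by
  set p := 1 - a * e
  have hp : IsIdempotentElem p := h.isIdempotentElem.one_sub
  have hap : Commute a p := h.commute_one_sub
  obtain ⟨u, hu⟩ := h.quasinilpotent.isUnit_one_sub
  have hau : Commute a u := hu ▸ (Commute.one_right a).sub_right ((Commute.refl a).mul_right hap)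
  have hpu : Commute p u := hu ▸ (Commute.one_right p).sub_right (hap.symm.mul_right (.refl p))
  have hleft : (1 - a) * p = u * p := by rw [hu, sub_mul, sub_mul, mul_assoc, hp.eq]
  have hright : p * (1 - a) = u * p := ((Commute.one_left p).sub_left hap).eq.symm.trans hleft
  refine ⟨↑u⁻¹ * p, ?_, ?_, ?_⟩
  · rw [← mul_assoc, ((Commute.one_left _).sub_left hau).units_inv_right.eq, mul_assoc, hleft,
      u.inv_mul_cancel_left]
  · rw [mul_assoc, hright, u.inv_mul_cancel_left]
  · rw [← mul_assoc, hpu.units_inv_right.eq, mul_assoc, hp.eq]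


/-- Cline's formula. -/
theorem mul_comm (h : IsWeakGDrazinInverse (a * b) e) :
    IsWeakGDrazinInverse (b * a) (b * (e * e) * a) := by
  have hf : b * a * (b * (e * e) * a) = b * e * a := by
    conv_rhs => rw [← h.mul_mul_self_eq]
    simp only [mul_assoc]
  refine ⟨?_, ?_, ?_⟩
  · rw [mul_assoc _ (b * a), hf]
    calc b * (e * e) * a * (b * e * a) = b * (e * (e * (a * b) * e)) * a := by
          simp only [mul_assoc]
      _ = b * (e * e) * a := by rw [h.mul_mul_eq]
  · calc b * a * (b * (e * e) * a) = b * (a * b * (e * e)) * a := by simp only [mul_assoc]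
      _ = b * ((e * e) * (a * b)) * a := by rw [(h.commute.mul_right h.commute).eq]
      _ = b * (e * e) * a * (b * a) := by simp only [mul_assoc]
  · have hq : IsQuasinilpotentB ((1 - a * b * e) * a * b) := by
      rw [mul_assoc _ a b, ← h.commute_one_sub.eq]
      exact h.quasinilpotent
    rw [mul_sub, mul_one, hf, show b * a - b * a * (b * e * a) = b * ((1 - a * b * e) * a) by
      noncomm_ring]
    exact hq.mul_comm

/-- Jacobson's lemma. -/
theorem exists_one_sub_mul_comm (h : IsWeakGDrazinInverse (1 - a * b) e) :
    ∃ f, IsWeakGDrazinInverse (1 - b * a) f := by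
  obtain ⟨X, hX1, hX2, hX3⟩ := h.exists_corner_inverse
  rw [sub_sub_cancel] at hX1 hX2
  have hleft : (1 - a * b) * (e - X) = 1 - X := by
    rw [mul_sub, sub_mul 1 (a * b) X, one_mul, hX1]; abel
  have hright : (e - X) * (1 - a * b) = 1 - X := by
    rw [sub_mul, mul_sub X 1 (a * b), mul_one, hX2, ← h.commute.eq]; abel
  have hβf : (1 - b * a) * (1 + b * (e - X) * a) = 1 - b * X * a :=
    calc (1 - b * a) * (1 + b * (e - X) * a) = 1 - b * a + b * ((1 - a * b) * (e - X)) * a := by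
          noncomm_ring
      _ = 1 - b * X * a := by rw [hleft]; noncomm_ring
  have hfβ : (1 + b * (e - X) * a) * (1 - b * a) = 1 - b * X * a :=
    calc (1 + b * (e - X) * a) * (1 - b * a) = 1 - b * a + b * ((e - X) * (1 - a * b)) * a := by
          noncomm_ring
      _ = 1 - b * X * a := by rw [hright]; noncomm_ring
  refine ⟨1 + b * (e - X) * a, ?_, hβf.trans hfβ.symm, ?_⟩
  · have hX : X + X * (a * b) * (e - X) = 0 := by
      rw [hX2, mul_sub, h.one_sub_mul_mul_eq_zero, hX3]; abel
    rw [hfβ]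
    calc (1 - b * X * a) * (1 + b * (e - X) * a)
        = 1 + b * (e - X) * a - b * (X + X * (a * b) * (e - X)) * a := by noncomm_ring
      _ = 1 + b * (e - X) * a := by rw [hX]; noncomm_ring
  · have hq : IsQuasinilpotentB ((1 - a * b) * X * a * b) := by
      rw [mul_assoc _ a b, mul_assoc _ X, hX2]; exact h.quasinilpotent
    rw [hβf, show (1 - b * a) * (1 - (1 - b * X * a)) = b * ((1 - a * b) * X * a) by noncomm_ring]
    exact hq.mul_comm

theorem add_of_mul_eq_zero (h : IsWeakGDrazinInverse a e) (hNa : N * a = 0) (hNN : N * N = 0) :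
    IsWeakGDrazinInverse (a + N) (e + e * e * N) := by
  have hNe : N * e = 0 := by
    rw [← h.mul_mul_self_eq, ← mul_assoc, ← mul_assoc, hNa, zero_mul, zero_mul]
  have hPf : (a + N) * (e + e * e * N) = a * e + e * N :=
    calc (a + N) * (e + e * e * N) = a * e + a * e * e * N + N * e + N * e * e * N := by
          noncomm_ring
      _ = a * e + e * N := by rw [h.mul_mul_self_eq, hNe]; simp
  have hfP : (e + e * e * N) * (a + N) = a * e + e * N :=
    calc (e + e * e * N) * (a + N) = e * a + e * N + e * e * (N * a) + e * e * (N * N) := by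
          noncomm_ring
      _ = a * e + e * N := by rw [hNa, hNN, ← h.commute.eq]; simp
  refine ⟨?_, hPf.trans hfP.symm, ?_⟩
  · rw [hfP]
    calc (a * e + e * N) * (e + e * e * N)
        = a * e * e + a * e * e * e * N + e * (N * e) + e * (N * e) * e * N := by noncomm_ring
      _ = e + e * e * N := by rw [h.mul_mul_self_eq, hNe]; simp
  · have hsplit : (a + N) * (1 - (a * e + e * N))
        = a * (1 - a * e) + (1 - a * e) * N - N * a * e - N * e * N := by noncomm_ring
    rw [hPf, hsplit, hNa, hNe, zero_mul, zero_mul, sub_zero, sub_zero]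
    refine h.quasinilpotent.add_of_mul_eq_zero ?_ ?_
    · calc (1 - a * e) * N * (a * (1 - a * e)) = (1 - a * e) * (N * a) * (1 - a * e) := by
            noncomm_ring
        _ = 0 := by rw [hNa]; simp
    · calc (1 - a * e) * N * ((1 - a * e) * N) = (1 - a * e) * (N * N - N * a * (e * N)) := by
            noncomm_ring
        _ = 0 := by rw [hNN, hNa]; simp

theorem exists_sub_of_mul_eq_self (h : IsWeakGDrazinInverse a e) (hNa : N * a = N)
    (hNN : N * N = 0) : ∃ f, IsWeakGDrazinInverse (a - N) f := by
  obtain ⟨X, hX1, hX2, hX3⟩ := h.exists_corner_inverse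
  have hNp : N * (1 - a * e) = 0 := by
    rw [← hX1, ← mul_assoc, mul_sub, mul_one, hNa, sub_self, zero_mul]
  have hNe : N * e = N := by
    rw [mul_sub, mul_one, ← mul_assoc, hNa, sub_eq_zero] at hNp; exact hNp.symm
  have hNX : N * X = 0 := by rw [← hX3, ← mul_assoc, hNp, zero_mul]
  have hqX : a * e * X = 0 := by rwa [sub_mul, one_mul, sub_eq_self] at hX3
  have hfy : (e + (e - X) * N) * (a - N) = a * e - X * N :=
    calc (e + (e - X) * N) * (a - N) = e * a - e * N + (e - X) * (N * a) - (e - X) * (N * N) := by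
          noncomm_ring
      _ = a * e - X * N := by rw [hNa, hNN, ← h.commute.eq]; noncomm_ring
  have hyf : (a - N) * (e + (e - X) * N) = a * e - X * N :=
    calc (a - N) * (e + (e - X) * N)
        = a * e + (a * e - X + (1 - a) * X) * N - N * e - (N * e - N * X) * N := by noncomm_ring
      _ = a * e - X * N := by rw [hX1, hNe, hNX, sub_zero, hNN]; noncomm_ring
  refine ⟨e + (e - X) * N, hfy ▸ ?_, hyf.trans hfy.symm, ?_⟩
  · calc (a * e - X * N) * (e + (e - X) * N)
        = a * e * e + (a * e * e - a * e * X) * N - X * (N * e) - X * (N * e - N * X) * N := by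
          noncomm_ring
      _ = e + (e - X) * N := by
          rw [h.mul_mul_self_eq, hqX, hNe, hNX, sub_zero, sub_zero, mul_assoc X N N, hNN]
          noncomm_ring
  · have hsplit : (a - N) * (1 - (a * e - X * N))
        = a * (1 - a * e) + a * X * N - N * (1 - a * e) - N * X * N := by noncomm_ring
    rw [hyf, hsplit, hNp, hNX, zero_mul, sub_zero, sub_zero]
    refine h.quasinilpotent.add_of_mul_eq_zero ?_ ?_
    · rw [mul_assoc, ← mul_assoc N, hNa, hNp, mul_zero]
    · calc a * X * N * (a * X * N) = a * X * ((N * a) * X) * N := by noncomm_ring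
        _ = 0 := by rw [hNa, hNX]; simp

end IsWeakGDrazinInverse

section

variable {a b Q N : R} {μ : ℂ}

theorem exists_isWeakGDrazinInverse_smul_one_sub_mul_comm
    (h : ∃ e, IsWeakGDrazinInverse (μ • 1 - a * b) e) :
    ∃ f, IsWeakGDrazinInverse (μ • 1 - b * a) f := by
  obtain ⟨e, he⟩ := h
  rcases eq_or_ne μ 0 with rfl | hμ
  · rw [zero_smul, zero_sub] at he ⊢
    have hab := he.neg
    rw [neg_neg] at hab
    exact ⟨_, hab.mul_comm.neg⟩
  · have he' := he.smul (inv_ne_zero hμ)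
    rw [smul_sub, smul_smul, inv_mul_cancel₀ hμ, one_smul, ← smul_mul_assoc] at he'
    obtain ⟨f, hf⟩ := he'.exists_one_sub_mul_comm
    have hf' := hf.smul hμ
    rw [smul_sub, mul_smul_comm, smul_smul, mul_inv_cancel₀ hμ, one_smul] at hf'
    exact ⟨_, hf'⟩

theorem exists_isWeakGDrazinInverse_smul_one_sub_add (hNQ : N * Q = 0) (hNN : N * N = 0)
    (h : ∃ e, IsWeakGDrazinInverse (μ • 1 - Q) e) :
    ∃ f, IsWeakGDrazinInverse (μ • 1 - (Q + N)) f := by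
  obtain ⟨e, he⟩ := h
  rcases eq_or_ne μ 0 with rfl | hμ
  · rw [zero_smul, zero_sub] at he ⊢
    rw [neg_add]
    exact ⟨_, he.add_of_mul_eq_zero (by rw [neg_mul_neg, hNQ]) (by rw [neg_mul_neg, hNN])⟩
  · have he' := he.smul (inv_ne_zero hμ)
    obtain ⟨f, hf⟩ := he'.exists_sub_of_mul_eq_self (N := μ⁻¹ • N)
      (by rw [smul_mul_smul, mul_sub, mul_smul_comm, mul_one, hNQ, sub_zero, smul_smul,
        mul_assoc, inv_mul_cancel₀ hμ, mul_one])
      (by rw [smul_mul_smul, hNN, smul_zero])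
    have hf' := hf.smul hμ
    rw [← smul_sub, smul_smul, mul_inv_cancel₀ hμ, one_smul, sub_sub] at hf'
    exact ⟨_, hf'⟩

end

variable [CompleteSpace R]

namespace IsQuasinilpotentB

variable {x c f : R}

theorem tendsto_pow_mul_norm_pow (hx : IsQuasinilpotentB x) (M : ℝ) :
    Tendsto (fun n : ℕ => M ^ n * ‖x ^ n‖) atTop (𝓝 0) := by
  set r : ℝ := 1 / (2 * (|M| + 1))
  have hr : 0 < r := by positivity
  have hMr : |M| * r ≤ 1 / 2 := by
    calc |M| * r ≤ (|M| + 1) * r := by gcongr; linarith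
      _ = 1 / 2 := by simp only [r]; field_simp
  have hgelfand := spectrum.pow_norm_pow_one_div_tendsto_nhds_spectralRadius x
  rw [show spectralRadius ℂ x = 0 from hx] at hgelfand
  refine squeeze_zero_norm' ?_ (tendsto_pow_atTop_nhds_zero_of_lt_one (r := (1 / 2 : ℝ))
    (by norm_num) (by norm_num))
  filter_upwards [hgelfand.eventually (gt_mem_nhds (ENNReal.ofReal_pos.mpr hr)),
    eventually_ne_atTop 0] with n hn hn0
  have hroot : ‖x ^ n‖ ^ (1 / n : ℝ) ≤ r :=
    ((ENNReal.ofReal_lt_ofReal_iff hr).mp hn).le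
  calc ‖M ^ n * ‖x ^ n‖‖ = |M| ^ n * (‖x ^ n‖ ^ (1 / n : ℝ)) ^ n := by
        rw [one_div, Real.rpow_inv_natCast_pow (norm_nonneg _) hn0, norm_mul, norm_pow,
          Real.norm_eq_abs, norm_norm]
    _ ≤ |M| ^ n * r ^ n := by gcongr
    _ = (|M| * r) ^ n := (mul_pow _ _ _).symm
    _ ≤ (1 / 2) ^ n := by gcongr

theorem eq_zero_of_eventually_norm_le (hx : IsQuasinilpotentB x) {M : ℝ}
    (h : ∀ᶠ n : ℕ in atTop, ‖c‖ ≤ M ^ n * ‖x ^ n‖ * ‖c‖) : c = 0 := by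
  have hlim := (hx.tendsto_pow_mul_norm_pow M).mul_const ‖c‖
  rw [zero_mul] at hlim
  exact norm_le_zero_iff.mp (ge_of_tendsto hlim h)

theorem eq_zero_of_eq_mul_mul_self (hx : IsQuasinilpotentB x) (h : c = f * c * x) : c = 0 := by
  have hpow : ∀ n : ℕ, c = f ^ n * c * x ^ n := by
    intro n
    induction n with
    | zero => simp
    | succ n ih =>
      calc c = f * (f ^ n * c * x ^ n) * x := by rw [← ih, ← h]
        _ = f ^ (n + 1) * c * x ^ (n + 1) := by
          rw [pow_succ' f, pow_succ x]; simp only [mul_assoc]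
  refine hx.eq_zero_of_eventually_norm_le (M := ‖f‖) ?_
  filter_upwards [eventually_gt_atTop 0] with n hn
  calc ‖c‖ = ‖f ^ n * c * x ^ n‖ := by rw [← hpow]
    _ ≤ ‖f‖ ^ n * ‖c‖ * ‖x ^ n‖ := by
      grw [norm_mul_le, norm_mul_le, norm_pow_le' f hn]
    _ = ‖f‖ ^ n * ‖x ^ n‖ * ‖c‖ := by ring

theorem eq_zero_of_eq_self_mul_mul (hx : IsQuasinilpotentB x) (h : c = x * c * f) : c = 0 := by
  have hpow : ∀ n : ℕ, c = x ^ n * c * f ^ n := by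
    intro n
    induction n with
    | zero => simp
    | succ n ih =>
      calc c = x * (x ^ n * c * f ^ n) * f := by rw [← ih, ← h]
        _ = x ^ (n + 1) * c * f ^ (n + 1) := by
          rw [pow_succ' x, pow_succ f]; simp only [mul_assoc]
  refine hx.eq_zero_of_eventually_norm_le (M := ‖f‖) ?_
  filter_upwards [eventually_gt_atTop 0] with n hn
  calc ‖c‖ = ‖x ^ n * c * f ^ n‖ := by rw [← hpow]
    _ ≤ ‖x ^ n‖ * ‖c‖ * ‖f‖ ^ n := by
      grw [norm_mul_le, norm_mul_le, norm_pow_le' f hn]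
    _ = ‖f‖ ^ n * ‖x ^ n‖ * ‖c‖ := by ring

end IsQuasinilpotentB

namespace IsWeakGDrazinInverse

variable {a e y : R}

/-- The off-diagonal corners of `y` with respect to `p = 1 - a * e` intertwine the quasinilpotent
`a * p` with the inverse `e` of `a` on the complementary corner, so they vanish. -/
theorem commute_of_commute (h : IsWeakGDrazinInverse a e) (hy : Commute y a) : Commute y e := by
  set p := 1 - a * e with hp_def
  have hp : IsIdempotentElem p := h.isIdempotentElem.one_sub
  have hap : Commute a p := h.commute_one_sub
  have hae : a * e = 1 - p := by rw [hp_def, sub_sub_cancel]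
  have hea : e * a = 1 - p := h.commute.eq ▸ hae
  have hep : e * (1 - p) = e := by rw [← hae, ← mul_assoc, h.mul_mul_eq]
  have hpe : (1 - p) * e = e := by rw [← hae, h.mul_mul_self_eq]
  have hpap : p * (a * p) = a * p := by rw [← mul_assoc, ← hap.eq, mul_assoc, hp.eq]
  have hlower : (1 - p) * y * p = 0 := by
    refine h.quasinilpotent.eq_zero_of_eq_mul_mul_self (f := e) ?_
    calc (1 - p) * y * p = e * (y * a) * p := by rw [hy.eq, ← hea]; simp only [mul_assoc]
      _ = (e * (1 - p)) * y * (p * (a * p)) := by rw [hep, hpap]; simp only [mul_assoc]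
      _ = e * ((1 - p) * y * p) * (a * p) := by simp only [mul_assoc]
  have hupper : p * y * (1 - p) = 0 := by
    refine h.quasinilpotent.eq_zero_of_eq_self_mul_mul (f := e) ?_
    calc p * y * (1 - p) = p * (a * y) * e := by rw [← hy.eq, ← hae]; simp only [mul_assoc]
      _ = (a * p * p) * y * ((1 - p) * e) := by
        rw [hpe, mul_assoc a, hp.eq, hap.eq]; simp only [mul_assoc]
      _ = a * p * (p * y * (1 - p)) * e := by simp only [mul_assoc]
  have hyp : Commute y (1 - p) := by
    rw [mul_sub, mul_one, sub_eq_zero] at hupper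
    rw [sub_mul, one_mul, sub_mul, sub_eq_zero] at hlower
    exact (Commute.one_right y).sub_right (hlower.trans hupper.symm)
  rw [← hae] at hyp
  calc y * e = y * (a * e) * e := by rw [mul_assoc, h.mul_mul_self_eq]
    _ = e * (a * y) * e := by rw [hyp.eq, h.commute.eq]; simp only [mul_assoc]
    _ = e * (y * (a * e)) := by rw [← hy.eq]; simp only [mul_assoc]
    _ = e * a * e * y := by rw [hyp.eq]; simp only [mul_assoc]
    _ = e * y := by rw [h.mul_mul_eq]

end IsWeakGDrazinInverse

section

variable {a Q N : R} {μ : ℂ}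

theorem exists_isGDrazinInverseB_iff :
    (∃ e, IsGDrazinInverseB a e) ↔ ∃ e, IsWeakGDrazinInverse a e := by
  have hsq : ∀ e : R, a - a ^ 2 * e = a * (1 - a * e) := fun e => by
    rw [mul_sub, mul_one, ← mul_assoc, ← sq]
  refine ⟨fun ⟨e, heq, hcomm, hq⟩ => ⟨e, heq.symm, (hcomm a rfl).symm, hsq e ▸ hq⟩,
    fun ⟨e, h⟩ => ⟨e, h.mul_mul_eq.symm, fun y hy => (h.commute_of_commute hy).eq.symm,
      (hsq e).symm ▸ h.quasinilpotent⟩⟩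

theorem mem_gDrazinSpectrum_iff {t : R} :
    μ ∈ gDrazinSpectrum t ↔ ¬∃ e, IsWeakGDrazinInverse (μ • 1 - t) e :=
  exists_isGDrazinInverseB_iff.not

theorem gDrazinSpectrum_mul_comm (a b : R) :
    gDrazinSpectrum (a * b) = gDrazinSpectrum (b * a) := by
  ext μ
  rw [mem_gDrazinSpectrum_iff, mem_gDrazinSpectrum_iff]
  exact not_congr ⟨exists_isWeakGDrazinInverse_smul_one_sub_mul_comm,
    exists_isWeakGDrazinInverse_smul_one_sub_mul_comm⟩

theorem gDrazinSpectrum_add_of_mul_eq_zero (hNQ : N * Q = 0) (hNN : N * N = 0) :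
    gDrazinSpectrum (Q + N) = gDrazinSpectrum Q := by
  ext μ
  rw [mem_gDrazinSpectrum_iff, mem_gDrazinSpectrum_iff]
  refine not_congr ⟨fun h => ?_, exists_isWeakGDrazinInverse_smul_one_sub_add hNQ hNN⟩
  simpa using exists_isWeakGDrazinInverse_smul_one_sub_add (N := -N)
    (by rw [neg_mul, mul_add, hNQ, hNN, add_zero, neg_zero]) (by rw [neg_mul_neg, hNN]) h

end

end

theorem stmt_14_general {X : Type*} [NormedAddCommGroup X] [NormedSpace ℂ X] [CompleteSpace X]
    (A B C D : X →L[ℂ] X)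
    (h1 : (A * C) ^ 2 = (D * B) * (A * C))
    (h2 : (D * B) ^ 2 = (A * C) * (D * B)) :
    gDrazinSpectrum (B * D) = gDrazinSpectrum (A * C) := by
  have hNQ : (A * C - D * B) * (D * B) = 0 := by rw [sub_mul, ← sq, h2, sub_self]
  have hNN : (A * C - D * B) * (A * C - D * B) = 0 := by
    rw [mul_sub, hNQ, sub_zero, sub_mul, ← sq, h1, sub_self]
  rw [gDrazinSpectrum_mul_comm, ← gDrazinSpectrum_add_of_mul_eq_zero hNQ hNN, add_sub_cancel]

theorem stmt_14 {X : Type*} [NormedAddCommGroup X] [NormedSpace ℂ X] [CompleteSpace X]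
    (A B C D : X →L[ℂ] X)
    (h1 : (A * C) ^ 2 = (D * B) * (A * C))
    (h2 : (D * B) ^ 2 = (A * C) * (D * B))
    (h3 : B * (A * C) * A = B * (D * B) * A)
    (h4 : C * (A * C) * D = C * (D * B) * D) :
    gDrazinSpectrum (B * D) = gDrazinSpectrum (A * C) :=
  stmt_14_general A B C D h1 h2
end

section
/- Let X be a complex Banach space and let A, B, C be bounded linear operators on X satisfying (ABA)B = (ACA)B and (ABA)C = (ACA)C. Then the g-Drazin spectrum of AC equals the g-Drazin spectrum of BA, i.e., {λ ∈ ℂ : λI − AC has no g-Drazin inverse} = {λ ∈ ℂ : λI − BA has no g-Drazin inverse}. -/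
open ContinuousLinearMap

section Algebra

variable {A : Type*} [NormedRing A] [NormedAlgebra ℂ A]

theorem isQuasinilpotentB_iff {q : A} : IsQuasinilpotentB q ↔ spectrum ℂ q ⊆ {0} := by
  simp [IsQuasinilpotentB, spectralRadius, Set.subset_def]

theorem IsQuasinilpotentB.isUnit_smul_one_sub {q : A} (hq : IsQuasinilpotentB q) {c : ℂ}
    (hc : c ≠ 0) : IsUnit (c • 1 - q) := by
  rw [← Algebra.algebraMap_eq_smul_one, ← spectrum.notMem_iff]
  exact fun hmem => hc (isQuasinilpotentB_iff.mp hq hmem)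

theorem IsQuasinilpotentB.isUnit_one_add {q : A} (hq : IsQuasinilpotentB q) : IsUnit (1 + q) := by
  simpa [add_comm] using (hq.isUnit_smul_one_sub (neg_ne_zero.mpr one_ne_zero)).neg

def bicommutant (a : A) : Subalgebra ℂ A :=
  Subalgebra.centralizer ℂ (Set.centralizer {a})

theorem mem_bicommutant_iff {a b : A} :
    b ∈ bicommutant a ↔ ∀ y, y * a = a * y → b * y = y * b := by
  simp [bicommutant, Subalgebra.mem_centralizer_iff, Set.mem_centralizer_iff, eq_comm]

theorem self_mem_bicommutant (a : A) : a ∈ bicommutant a :=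
  Set.subset_centralizer_centralizer rfl

theorem commute_of_mem_bicommutant {a b c : A} (hb : b ∈ bicommutant a)
    (hc : c ∈ bicommutant a) : Commute b c :=
  Set.centralizer_centralizer_comm_of_comm (by simp) b hb c hc

theorem units_inv_mem_bicommutant {a : A} {u : Aˣ} (hu : (u : A) ∈ bicommutant a) :
    (↑u⁻¹ : A) ∈ bicommutant a :=
  fun y hy => (Commute.units_inv_right (hu y hy)).eq

theorem bicommutant_smul_one_sub (c : ℂ) (a : A) : bicommutant (c • 1 - a) = bicommutant a := by
  have key (y : A) : y * (c • 1 - a) = (c • 1 - a) * y ↔ y * a = a * y := by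
    simp [mul_sub, sub_mul]
  ext b
  simp only [mem_bicommutant_iff, key]

/-- `p` plays the role of the spectral idempotent `aᵖ = 1 - a aᵈ`. -/
def IsSpectralIdempotent (a p : A) : Prop :=
  IsIdempotentElem p ∧ p ∈ bicommutant a ∧ IsQuasinilpotentB (a * p) ∧ IsUnit (a + p)

theorem IsGDrazinInverseB.mem_bicommutant {a e : A} (h : IsGDrazinInverseB a e) :
    e ∈ bicommutant a :=
  mem_bicommutant_iff.mpr h.2.1

theorem IsGDrazinInverseB.isSpectralIdempotent {a e : A} (h : IsGDrazinInverseB a e) :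
    IsSpectralIdempotent a (1 - a * e) := by
  have he := h.mem_bicommutant
  obtain ⟨hexe, -, hq⟩ := h
  have hea : e * a = a * e := commute_of_mem_bicommutant he (self_mem_bicommutant a)
  have hae_idem : IsIdempotentElem (a * e) := by
    rw [IsIdempotentElem, mul_assoc, ← mul_assoc e a e, ← hexe]
  have hbic : 1 - a * e ∈ bicommutant a :=
    sub_mem (one_mem _) (mul_mem (self_mem_bicommutant a) he)
  have hap : a * (1 - a * e) = a - a ^ 2 * e := by rw [mul_one_sub, ← mul_assoc, sq]
  refine ⟨hae_idem.one_sub, hbic, hap ▸ hq, ?_⟩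
  have hprod : (a + (1 - a * e)) * (e + (1 - a * e)) = 1 + a * (1 - a * e) := by
    have hpe : (1 - a * e) * e = 0 := by rw [one_sub_mul, ← hea, ← hexe, sub_self]
    rw [mul_add, add_mul, add_mul, hpe, hae_idem.one_sub.eq]
    abel
  have hcomm : Commute (a + (1 - a * e)) (e + (1 - a * e)) :=
    commute_of_mem_bicommutant (add_mem (self_mem_bicommutant a) hbic) (add_mem he hbic)
  exact (hcomm.isUnit_mul_iff.mp (hprod ▸ (hap ▸ hq).isUnit_one_add)).1

theorem IsSpectralIdempotent.exists_isGDrazinInverseB {a p : A} (h : IsSpectralIdempotent a p) :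
    ∃ e, IsGDrazinInverseB a e := by
  obtain ⟨hp, hpbic, hq, u, hu⟩ := h
  have hubic : (u : A) ∈ bicommutant a := hu ▸ add_mem (self_mem_bicommutant a) hpbic
  have hebic : ↑u⁻¹ * (1 - p) ∈ bicommutant a :=
    mul_mem (units_inv_mem_bicommutant hubic) (sub_mem (one_mem _) hpbic)
  have hae : a * (↑u⁻¹ * (1 - p)) = 1 - p := by
    have hap : a * (1 - p) = u * (1 - p) := by
      rw [hu, add_mul, hp.mul_one_sub_self, add_zero]
    rw [← mul_assoc, ← (commute_of_mem_bicommutant (units_inv_mem_bicommutant hubic)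
      (self_mem_bicommutant a)).eq, mul_assoc, hap, u.inv_mul_cancel_left]
  refine ⟨↑u⁻¹ * (1 - p), ?_, mem_bicommutant_iff.mp hebic, ?_⟩
  · rw [mul_assoc, hae, mul_assoc, hp.one_sub.eq]
  · rw [sq, mul_assoc, hae, mul_one_sub, sub_sub_cancel]
    exact hq

theorem IsSpectralIdempotent.exists_mem_bicommutant_mul_eq {μ : ℂ} (hμ : μ ≠ 0) {a p : A}
    (h : IsSpectralIdempotent (μ • 1 - a) p) : ∃ n ∈ bicommutant a, n * a = p ∧ p * n = n := by
  obtain ⟨hp, hpbic, hq, -⟩ := h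
  rw [bicommutant_smul_one_sub] at hpbic
  have hαbic : μ • 1 - a ∈ bicommutant a :=
    sub_mem (Subalgebra.smul_mem _ (one_mem _) μ) (self_mem_bicommutant a)
  obtain ⟨u, hu⟩ := hq.isUnit_smul_one_sub hμ
  have hubic : (u : A) ∈ bicommutant a :=
    hu ▸ sub_mem (Subalgebra.smul_mem _ (one_mem _) μ) (mul_mem hαbic hpbic)
  have huinv := units_inv_mem_bicommutant hubic
  refine ⟨p * ↑u⁻¹, mul_mem hpbic huinv, ?_, by rw [← mul_assoc, hp.eq]⟩
  -- On the range of `p`, `a = μ - (μ - a)` agrees with `u = μ - (μ - a) p`, which is invertible.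
  have hpa : p * a = p * u := by
    have hpαp : p * ((μ • 1 - a) * p) = (μ • 1 - a) * p := by
      rw [← mul_assoc, (commute_of_mem_bicommutant hpbic hαbic).eq, mul_assoc, hp.eq]
    rw [hu, mul_sub, hpαp, sub_mul, mul_smul_comm, smul_mul_assoc, mul_one, one_mul,
      sub_sub_cancel, (commute_of_mem_bicommutant hpbic (self_mem_bicommutant a)).eq]
  rw [mul_assoc, (commute_of_mem_bicommutant huinv (self_mem_bicommutant a)).eq, ← mul_assoc,
    hpa, u.mul_inv_cancel_right]

end Algebra

section Operators

variable {E F : Type*} [NormedAddCommGroup E] [NormedSpace ℂ E]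
  [NormedAddCommGroup F] [NormedSpace ℂ F]

theorem isUnit_smul_one_sub_comp_comm {c : ℂ} (hc : c ≠ 0) {f : F →L[ℂ] E} {g : E →L[ℂ] F}
    (h : IsUnit (c • 1 - f ∘L g)) : IsUnit (c • 1 - g ∘L f) := by
  obtain ⟨r, hr, hr'⟩ := isUnit_iff_exists.mp h
  refine isUnit_iff_exists.mpr ⟨c⁻¹ • (1 + g ∘L r ∘L f), ?_, ?_⟩
  · ext v
    have := congrArg g (DFunLike.congr_fun hr (f v))
    simp only [mul_apply_eq_comp, sub_apply, smul_apply, one_apply_eq_self, comp_apply,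
      add_apply, map_add, map_smul, map_sub] at this ⊢
    linear_combination (norm := match_scalars <;> field_simp <;> ring) c⁻¹ • this
  · ext v
    have := congrArg g (DFunLike.congr_fun hr' (f v))
    simp only [mul_apply_eq_comp, sub_apply, smul_apply, one_apply_eq_self, comp_apply,
      add_apply, map_smul, map_sub] at this ⊢
    linear_combination (norm := match_scalars <;> field_simp <;> ring) c⁻¹ • this

theorem spectrum_comp_subset (f : F →L[ℂ] E) (g : E →L[ℂ] F) :
    spectrum ℂ (g ∘L f) ⊆ spectrum ℂ (f ∘L g) ∪ {0} := by
  intro μ hμ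
  by_contra! hcon
  simp only [Set.mem_union, Set.mem_singleton_iff, not_or] at hcon
  rw [spectrum.mem_iff, Algebra.algebraMap_eq_smul_one] at hμ
  rw [spectrum.notMem_iff, Algebra.algebraMap_eq_smul_one] at hcon
  exact hμ (isUnit_smul_one_sub_comp_comm hcon.2 hcon.1)

theorem IsQuasinilpotentB.comp_comm {f : F →L[ℂ] E} {g : E →L[ℂ] F}
    (h : IsQuasinilpotentB (f ∘L g)) : IsQuasinilpotentB (g ∘L f) := by
  rw [isQuasinilpotentB_iff] at h ⊢
  exact (spectrum_comp_subset f g).trans (Set.union_subset h subset_rfl)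

theorem comp_mul_comp_mem_bicommutant {x : F →L[ℂ] E} {y : E →L[ℂ] F} {m : E →L[ℂ] E}
    (hm : m ∈ bicommutant (x ∘L y)) : y ∘L (m * (x ∘L y)) ∘L x ∈ bicommutant (y ∘L x) := by
  have hma := DFunLike.congr_fun (commute_of_mem_bicommutant hm (self_mem_bicommutant _)).eq
  rw [mem_bicommutant_iff] at hm ⊢
  intro z hz
  -- `x z y` commutes with `x y`, hence with `m`.
  have hmw := DFunLike.congr_fun (hm (x ∘L z ∘L y) (congrArg (x ∘L · ∘L y) hz))
  have hz' := DFunLike.congr_fun hz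
  ext v
  simp only [mul_apply_eq_comp, comp_apply] at hma hmw hz' ⊢
  rw [← hz' v, hmw, ← hz', ← hma]

theorem IsGDrazinInverseB.comp_comm {x : F →L[ℂ] E} {y : E →L[ℂ] F} {e : E →L[ℂ] E}
    (h : IsGDrazinInverseB (x ∘L y) e) : IsGDrazinInverseB (y ∘L x) (y ∘L (e * e) ∘L x) := by
  set a := x ∘L y with ha
  have he := h.mem_bicommutant
  obtain ⟨hexe, -, hq⟩ := h
  have hea : e * a = a * e := commute_of_mem_bicommutant he (self_mem_bicommutant a)
  have heea : e * e * a = e := by rw [mul_assoc, hea, ← mul_assoc, ← hexe]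
  have haee : a * (e * e) = e := by rw [← mul_assoc, ← hea, ← hexe]
  refine ⟨?_, mem_bicommutant_iff.mp ?_, ?_⟩
  · change _ = y ∘L (e * e * a * a * (e * e)) ∘L x
    rw [mul_assoc _ a, haee, heea]
  · have heeea : e * e * e * a = e * e := by
      rw [mul_assoc (e * e) e a, hea, ← mul_assoc, heea]
    have := comp_mul_comp_mem_bicommutant (mul_mem (mul_mem he he) he)
    rwa [← ha, heeea] at this
  · have hsub : y ∘L x - (y ∘L x) ^ 2 * (y ∘L (e * e) ∘L x) = y ∘L ((1 - a * e) ∘L x) := by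
      change y ∘L x - y ∘L (a * a * (e * e)) ∘L x = _
      rw [mul_assoc, haee]
      ext v
      simp
    rw [hsub]
    refine IsQuasinilpotentB.comp_comm ?_
    change IsQuasinilpotentB ((1 - a * e) * a)
    rwa [one_sub_mul, mul_assoc, hea, ← mul_assoc, ← sq]

theorem IsSpectralIdempotent.exists_smul_one_sub_comp_comm {μ : ℂ} (hμ : μ ≠ 0)
    {x : F →L[ℂ] E} {y : E →L[ℂ] F} {p : E →L[ℂ] E}
    (h : IsSpectralIdempotent (μ • 1 - x ∘L y) p) :
    ∃ p', IsSpectralIdempotent (μ • 1 - y ∘L x) p' := by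
  set a := x ∘L y with ha
  obtain ⟨n, hn, hna, hpn⟩ := h.exists_mem_bicommutant_mul_eq hμ
  obtain ⟨-, hpbic, hq, hunit⟩ := h
  rw [bicommutant_smul_one_sub] at hpbic
  have hnp : n * p = n := by rw [(commute_of_mem_bicommutant hn hpbic).eq, hpn]
  refine ⟨y ∘L n ∘L x, ?_, ?_, ?_, ?_⟩
  · change y ∘L (n * a * n) ∘L x = _
    rw [hna, hpn]
  · have hnna : n * n * a = n := by rw [mul_assoc, hna, hnp]
    rw [bicommutant_smul_one_sub]
    have := comp_mul_comp_mem_bicommutant (mul_mem hn hn)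
    rwa [← ha, hnna] at this
  · have hmul : (μ • 1 - y ∘L x) * (y ∘L n ∘L x) = y ∘L ((μ • n - a * n) ∘L x) := by
      ext v
      simp [a]
    rw [hmul]
    refine IsQuasinilpotentB.comp_comm ?_
    change IsQuasinilpotentB ((μ • n - a * n) * a)
    rwa [sub_mul, smul_mul_assoc, mul_assoc, hna, ← smul_one_mul, ← sub_mul]
  · have hadd : μ • 1 - y ∘L x + y ∘L n ∘L x = μ • 1 - y ∘L ((1 - n) ∘L x) := by
      ext v
      simp only [add_apply, sub_apply, smul_apply, one_apply_eq_self, comp_apply, map_sub]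
      abel
    rw [hadd]
    refine isUnit_smul_one_sub_comp_comm hμ ?_
    change IsUnit (μ • 1 - (1 - n) * a)
    rwa [one_sub_mul, hna, ← sub_add]

theorem exists_isGDrazinInverseB_smul_one_sub_comp_comm (x : F →L[ℂ] E) (y : E →L[ℂ] F) (μ : ℂ)
    (h : ∃ e, IsGDrazinInverseB (μ • 1 - x ∘L y) e) :
    ∃ f, IsGDrazinInverseB (μ • 1 - y ∘L x) f := by
  obtain ⟨e, he⟩ := h
  rcases eq_or_ne μ 0 with rfl | hμ
  · rw [zero_smul, zero_sub, ← neg_comp] at he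
    rw [zero_smul, zero_sub, ← comp_neg]
    exact ⟨_, he.comp_comm⟩
  · obtain ⟨p', hp'⟩ := he.isSpectralIdempotent.exists_smul_one_sub_comp_comm hμ
    exact hp'.exists_isGDrazinInverseB

theorem exists_isGDrazinInverseB_smul_one_sub_add {v q : E →L[ℂ] E} (hqv : q * v = 0)
    (hqq : q * q = 0) (μ : ℂ) (h : ∃ e, IsGDrazinInverseB (μ • 1 - v) e) :
    ∃ e, IsGDrazinInverseB (μ • 1 - (v + q)) e := by
  -- `v` and `v + q` map into `K = ker q` and agree on `K`: swap twice through the inclusion of `K`.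
  set K := LinearMap.ker (q : E →ₗ[ℂ] E)
  have hv (z : E) : v z ∈ K := LinearMap.mem_ker.mpr (DFunLike.congr_fun hqv z)
  have hvq (z : E) : (v + q) z ∈ K :=
    LinearMap.mem_ker.mpr (DFunLike.congr_fun (by rw [mul_add, hqv, hqq, add_zero] :
      q * (v + q) = 0) z)
  have hagree : v.codRestrict K hv ∘L K.subtypeL = (v + q).codRestrict K hvq ∘L K.subtypeL := by
    ext z
    simp
  have := exists_isGDrazinInverseB_smul_one_sub_comp_comm K.subtypeL (v.codRestrict K hv) μ h
  rw [hagree] at this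
  exact exists_isGDrazinInverseB_smul_one_sub_comp_comm _ K.subtypeL μ this

theorem gDrazinSpectrum_subset_of_sub_mul_eq_zero {u v : E →L[ℂ] E} (hu : (u - v) * u = 0)
    (hv : (u - v) * v = 0) : gDrazinSpectrum u ⊆ gDrazinSpectrum v := by
  intro μ hμ h
  have hqq : (u - v) * (u - v) = 0 := by rw [mul_sub, hu, hv, sub_zero]
  exact hμ (add_sub_cancel v u ▸ exists_isGDrazinInverseB_smul_one_sub_add hv hqq μ h)

theorem gDrazinSpectrum_eq_of_sub_mul_eq_zero {u v : E →L[ℂ] E} (hu : (u - v) * u = 0)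
    (hv : (u - v) * v = 0) : gDrazinSpectrum u = gDrazinSpectrum v := by
  have hneg (w : E →L[ℂ] E) (hw : (u - v) * w = 0) : (v - u) * w = 0 := by
    rw [← neg_sub, neg_mul, hw, neg_zero]
  exact (gDrazinSpectrum_subset_of_sub_mul_eq_zero hu hv).antisymm
    (gDrazinSpectrum_subset_of_sub_mul_eq_zero (hneg v hv) (hneg u hu))

theorem gDrazinSpectrum_mul_comm_s15 (x y : E →L[ℂ] E) :
    gDrazinSpectrum (x * y) = gDrazinSpectrum (y * x) := by
  ext μ
  exact not_congr ⟨exists_isGDrazinInverseB_smul_one_sub_comp_comm x y μ,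
    exists_isGDrazinInverseB_smul_one_sub_comp_comm y x μ⟩

end Operators

theorem stmt_15_general {X : Type*} [NormedAddCommGroup X] [NormedSpace ℂ X]
    (A B C : X →L[ℂ] X)
    (h1 : (A * B * A) * B = (A * C * A) * B)
    (h2 : (A * B * A) * C = (A * C * A) * C) :
    gDrazinSpectrum (A * C) = gDrazinSpectrum (B * A) := by
  have hC : (A * C - A * B) * (A * C) = 0 := by
    rw [sub_mul, sub_eq_zero]
    simpa only [mul_assoc] using h2.symm
  have hB : (A * C - A * B) * (A * B) = 0 := by
    rw [sub_mul, sub_eq_zero]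
    simpa only [mul_assoc] using h1.symm
  rw [gDrazinSpectrum_eq_of_sub_mul_eq_zero hC hB, gDrazinSpectrum_mul_comm_s15]

theorem stmt_15 {X : Type*} [NormedAddCommGroup X] [NormedSpace ℂ X] [CompleteSpace X]
    (A B C : X →L[ℂ] X)
    (h1 : (A * B * A) * B = (A * C * A) * B)
    (h2 : (A * B * A) * C = (A * C * A) * C) :
    gDrazinSpectrum (A * C) = gDrazinSpectrum (B * A) :=
  stmt_15_general A B C h1 h2
end

section
/- Let X be a complex Banach space and let A, B, C, D be bounded linear operators on X satisfying (AC)² = (DB)(AC), (DB)² = (AC)(DB), B(AC)A = B(DB)A, and C(AC)D = C(DB)D. Then the Drazin spectrum of BD equals the Drazin spectrum of AC, i.e., {λ ∈ ℂ : λI − BD has no Drazin inverse} = {λ ∈ ℂ : λI − AC has no Drazin inverse}. -/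
/-- The Drazin spectrum. -/
def drazinSpectrum {A : Type*} [NormedRing A] [NormedAlgebra ℂ A] (t : A) : Set ℂ :=
  {lam : ℂ | ¬ ∃ e, IsDrazinInverse (lam • (1 : A) - t) e}

set_option maxRecDepth 8000

/-- Commuting version of being a Drazin inverse. -/
def DIc {R : Type*} [Ring R] (a e : R) : Prop :=
  e * a = a * e ∧ e = e * a * e ∧ ∃ k : ℕ, 1 ≤ k ∧ a ^ k = a ^ (k + 1) * e

theorem IsDrazinInverse.dic {R : Type*} [Ring R] {a e : R} (h : IsDrazinInverse a e) :
    DIc a e := ⟨h.2.1 a rfl, h.1, h.2.2⟩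

theorem DIc.isDrazinInverse {R : Type*} [Ring R] {a e : R} (h : DIc a e) :
    IsDrazinInverse a e := by
  obtain ⟨ce, hee, k, hk, hpow⟩ := h
  refine ⟨hee, ?_, k, hk, hpow⟩
  intro y hy
  have hce : Commute e a := ce
  have hca : Commute a e := ce.symm
  have hya : Commute y a := hy
  -- e * (a*e) = e
  have hep : e * (a * e) = e := by rw [← mul_assoc]; exact hee.symm
  have hpe : (a * e) * e = e := by rw [← ce, mul_assoc]; exact hep
  -- (a*e) is idempotent
  have hidem : (a * e) * (a * e) = a * e := by rw [mul_assoc]; rw [hep]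
  -- powers of (a*e)
  have hpowp : ∀ m : ℕ, (a * e) ^ (m + 1) = a * e := by
    intro m; induction m with
    | zero => simp
    | succ m ih => rw [pow_succ, ih, hidem]
  obtain ⟨k', rfl⟩ : ∃ k', k = k' + 1 := ⟨k - 1, (Nat.succ_pred_eq_of_pos hk).symm⟩
  have hk1 : (a * e) ^ (k' + 1) = a * e := hpowp k'
  have hrep1 : a ^ (k' + 1) * e ^ (k' + 1) = a * e := by rw [← hca.mul_pow]; exact hk1
  have hrep2 : e ^ (k' + 1) * a ^ (k' + 1) = a * e := by
    rw [← hce.mul_pow]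
    have : (e * a) ^ (k' + 1) = (a * e) ^ (k' + 1) := by rw [ce]
    rw [this]; exact hk1
  -- a^k * (a*e) = a^k and (a*e) * a^k = a^k
  have haka : a ^ (k' + 1) * (a * e) = a ^ (k' + 1) := by
    rw [← mul_assoc, ← pow_succ]; exact hpow.symm
  have haea : (a * e) * a ^ (k' + 1) = a ^ (k' + 1) := by
    have h1 : e * a ^ (k' + 1) = a ^ (k' + 1) * e := (hce.pow_right _)
    rw [mul_assoc, h1, ← mul_assoc, ← pow_succ']
    exact hpow.symm
  have hyak : y * a ^ (k' + 1) = a ^ (k' + 1) * y := (hya.pow_right _)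
  -- (a*e) commutes with y
  have hp1 : (a * e) * y = (a * e) * y * (a * e) := by
    calc (a * e) * y = e ^ (k' + 1) * a ^ (k' + 1) * y := by rw [hrep2]
    _ = e ^ (k' + 1) * (a ^ (k' + 1) * y) := by rw [mul_assoc]
    _ = e ^ (k' + 1) * (y * a ^ (k' + 1)) := by rw [← hyak]
    _ = e ^ (k' + 1) * (y * (a ^ (k' + 1) * (a * e))) := by rw [haka]
    _ = e ^ (k' + 1) * (y * a ^ (k' + 1) * (a * e)) := by rw [mul_assoc (y) _ _]
    _ = e ^ (k' + 1) * (a ^ (k' + 1) * y * (a * e)) := by rw [hyak]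
    _ = e ^ (k' + 1) * a ^ (k' + 1) * y * (a * e) := by noncomm_ring
    _ = (a * e) * y * (a * e) := by rw [hrep2]
  have hp2 : y * (a * e) = (a * e) * y * (a * e) := by
    calc y * (a * e) = y * (a ^ (k' + 1) * e ^ (k' + 1)) := by rw [hrep1]
    _ = y * a ^ (k' + 1) * e ^ (k' + 1) := by rw [← mul_assoc]
    _ = a ^ (k' + 1) * y * e ^ (k' + 1) := by rw [hyak]
    _ = ((a * e) * a ^ (k' + 1)) * y * e ^ (k' + 1) := by rw [haea]
    _ = (a * e) * (a ^ (k' + 1) * y) * e ^ (k' + 1) := by rw [mul_assoc (a*e)]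
    _ = (a * e) * (y * a ^ (k' + 1)) * e ^ (k' + 1) := by rw [hyak]
    _ = (a * e) * y * (a ^ (k' + 1) * e ^ (k' + 1)) := by noncomm_ring
    _ = (a * e) * y * (a * e) := by rw [hrep1]
  have hpy : (a * e) * y = y * (a * e) := by rw [hp1, ← hp2]
  -- conclude
  calc e * y = (e * (a * e)) * y := by rw [hep]
  _ = e * ((a * e) * y) := by rw [mul_assoc]
  _ = e * (y * (a * e)) := by rw [hpy]
  _ = e * (y * a) * e := by noncomm_ring
  _ = e * (a * y) * e := by rw [hy]
  _ = ((e * a) * y) * e := by noncomm_ring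
  _ = ((a * e) * y) * e := by rw [ce]
  _ = (y * (a * e)) * e := by rw [hpy]
  _ = y * ((a * e) * e) := by rw [mul_assoc]
  _ = y * e := by rw [hpe]

theorem DIc.neg {R : Type*} [Ring R] {a e : R} (h : DIc a e) : DIc (-a) (-e) := by
  obtain ⟨ce, hee, k, hk, hpow⟩ := h
  refine ⟨by simp [ce], by simpa using hee, k, hk, ?_⟩
  have h2 : a ^ k * (a * e) = a ^ k := by rw [← mul_assoc, ← pow_succ]; exact hpow.symm
  have h3 : (-a) ^ k = (-1 : R) ^ k * a ^ k := neg_pow a k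
  have h4 : (-a) ^ (k + 1) * (-e) = (-1 : R) ^ k * a ^ k * (a * e) := by
    rw [neg_pow a (k + 1), pow_succ (-1 : R) k, pow_succ a k]
    noncomm_ring
  rw [h3, h4, mul_assoc, h2]

theorem DIc.smul {R : Type*} [Ring R] [Algebra ℂ R] {σ : ℂ} (hσ : σ ≠ 0) {a e : R}
    (h : DIc a e) : DIc (σ • a) (σ⁻¹ • e) := by
  obtain ⟨ce, hee, k, hk, hpow⟩ := h
  have hσσ : σ⁻¹ * σ = 1 := inv_mul_cancel₀ hσ
  have hσσ' : σ * σ⁻¹ = 1 := mul_inv_cancel₀ hσ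
  refine ⟨?_, ?_, k, hk, ?_⟩
  · rw [smul_mul_smul_comm, smul_mul_smul_comm, hσσ, hσσ', one_smul, one_smul, ce]
  · rw [smul_mul_smul_comm, hσσ, one_smul, mul_smul_comm, ← hee]
  · rw [smul_pow, smul_pow, smul_mul_smul_comm, hpow, pow_succ σ, mul_assoc, hσσ', mul_one]

theorem key0' {R : Type*} [Ring R] (p b d e : R)
    (hqp : d * b * p = p * p) (hpq : p * (d * b) = d * b * (d * b))
    (hpnd : p * ((p - d * b) * d) = 0) (he : DIc p e) : ∃ f, DIc (b * d) f := by
  obtain ⟨ce, hee, k, hk, hpow⟩ := he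
  obtain ⟨k, rfl⟩ : ∃ k', k = k' + 1 := ⟨k - 1, (Nat.succ_pred_eq_of_pos hk).symm⟩
  set q := d * b with hq
  have d1 : p * (e * e) = e := by
    calc p * (e * e) = (p * e) * e := by rw [mul_assoc]
    _ = (e * p) * e := by rw [ce]
    _ = e := hee.symm
  have d1' : (e * e) * p = e := by
    calc (e * e) * p = e * (e * p) := by rw [mul_assoc]
    _ = e * (p * e) := by rw [ce]
    _ = e * p * e := by rw [← mul_assoc]
    _ = e := hee.symm
  have d2 : q * e = p * e := by
    calc q * e = q * (p * (e * e)) := by rw [d1]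
    _ = (q * p) * (e * e) := by rw [← mul_assoc]
    _ = (p * p) * (e * e) := by rw [hqp]
    _ = p * (p * (e * e)) := by rw [mul_assoc]
    _ = p * e := by rw [d1]
  have d2' : q * (e * e) = e := by
    calc q * (e * e) = (q * e) * e := by rw [← mul_assoc]
    _ = (p * e) * e := by rw [d2]
    _ = p * (e * e) := by rw [mul_assoc]
    _ = e := d1
  have hpd : p * (q * d) = p * (p * d) := by
    rw [sub_mul, mul_sub, sub_eq_zero] at hpnd
    exact hpnd.symm
  have d3' : e * (q * d) = e * (p * d) := by
    calc e * (q * d) = ((e * e) * p) * (q * d) := by rw [d1']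
    _ = (e * e) * (p * (q * d)) := by rw [mul_assoc]
    _ = (e * e) * (p * (p * d)) := by rw [hpd]
    _ = ((e * e) * p) * (p * d) := by rw [← mul_assoc]
    _ = e * (p * d) := by rw [d1']
  have qpow : ∀ j : ℕ, q ^ (j + 2) = p ^ (j + 1) * q := by
    intro j; induction j with
    | zero => rw [pow_two, pow_one, ← hpq]
    | succ j ih =>
      calc q ^ (j + 3) = q ^ (j + 2) * q := pow_succ _ _
      _ = (p ^ (j + 1) * q) * q := by rw [ih]
      _ = p ^ (j + 1) * (q * q) := by rw [mul_assoc]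
      _ = p ^ (j + 1) * (p * q) := by rw [← hpq]
      _ = (p ^ (j + 1) * p) * q := by rw [← mul_assoc]
      _ = p ^ (j + 2) * q := by rw [← pow_succ]
  have bdpow : ∀ j : ℕ, (b * d) ^ (j + 1) = b * (q ^ j * d) := by
    intro j; induction j with
    | zero => simp
    | succ j ih =>
      calc (b * d) ^ (j + 2) = (b * d) ^ (j + 1) * (b * d) := pow_succ _ _
      _ = (b * (q ^ j * d)) * (b * d) := by rw [ih]
      _ = b * ((q ^ j * (d * b)) * d) := by noncomm_ring
      _ = b * ((q ^ j * q) * d) := by rw [← hq]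
      _ = b * (q ^ (j + 1) * d) := by rw [← pow_succ]
  have d5 : ∀ j : ℕ, p ^ (k + j + 2) * e = p ^ (k + j + 1) := by
    intro j; induction j with
    | zero => exact hpow.symm
    | succ j ih =>
      calc p ^ (k + j + 3) * e = (p * p ^ (k + j + 2)) * e := by rw [← pow_succ']
      _ = p * (p ^ (k + j + 2) * e) := by rw [mul_assoc]
      _ = p * p ^ (k + j + 1) := by rw [ih]
      _ = p ^ (k + j + 2) := by rw [← pow_succ']
  refine ⟨b * ((e * e) * d), ?_, ?_, k + 3, by omega, ?_⟩
  · -- commutation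
    have c1a : (b * ((e * e) * d)) * (b * d) = b * (e * d) := by
      calc (b * ((e * e) * d)) * (b * d) = b * ((e * e) * ((d * b) * d)) := by noncomm_ring
      _ = b * ((e * e) * (q * d)) := by rw [← hq]
      _ = b * (e * (e * (q * d))) := by noncomm_ring
      _ = b * (e * (e * (p * d))) := by rw [d3']
      _ = b * (((e * e) * p) * d) := by noncomm_ring
      _ = b * (e * d) := by rw [d1']
    have c1b : (b * d) * (b * ((e * e) * d)) = b * (e * d) := by
      calc (b * d) * (b * ((e * e) * d)) = b * ((d * b) * ((e * e) * d)) := by noncomm_ring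
      _ = b * (q * ((e * e) * d)) := by rw [← hq]
      _ = b * ((q * (e * e)) * d) := by noncomm_ring
      _ = b * (e * d) := by rw [d2']
    rw [c1a, c1b]
  · -- f = f (bd) f
    have c1a : (b * ((e * e) * d)) * (b * d) = b * (e * d) := by
      calc (b * ((e * e) * d)) * (b * d) = b * ((e * e) * ((d * b) * d)) := by noncomm_ring
      _ = b * ((e * e) * (q * d)) := by rw [← hq]
      _ = b * (e * (e * (q * d))) := by noncomm_ring
      _ = b * (e * (e * (p * d))) := by rw [d3']
      _ = b * (((e * e) * p) * d) := by noncomm_ring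
      _ = b * (e * d) := by rw [d1']
    have c2' : (b * (e * d)) * (b * ((e * e) * d)) = b * ((e * e) * d) := by
      calc (b * (e * d)) * (b * ((e * e) * d))
          = b * (e * ((d * b) * ((e * e) * d))) := by noncomm_ring
      _ = b * (e * (q * ((e * e) * d))) := by rw [← hq]
      _ = b * (e * ((q * (e * e)) * d)) := by noncomm_ring
      _ = b * (e * (e * d)) := by rw [d2']
      _ = b * ((e * e) * d) := by noncomm_ring
    rw [c1a]
    exact c2'.symm
  · -- power condition
    have lhs : (b * d) ^ (k + 3) = b * (p ^ (k + 2) * d) := by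
      calc (b * d) ^ (k + 3) = b * (q ^ (k + 2) * d) := bdpow (k + 2)
      _ = b * ((p ^ (k + 1) * q) * d) := by rw [qpow k]
      _ = b * ((p ^ k * p) * (q * d)) := by rw [← pow_succ]; noncomm_ring
      _ = b * (p ^ k * (p * (q * d))) := by rw [mul_assoc]
      _ = b * (p ^ k * (p * (p * d))) := by rw [hpd]
      _ = b * (((p ^ k * p) * p) * d) := by noncomm_ring
      _ = b * (p ^ (k + 2) * d) := by rw [← pow_succ, ← pow_succ]
    have rhs : (b * d) ^ (k + 4) * (b * ((e * e) * d)) = b * (p ^ (k + 2) * d) := by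
      calc (b * d) ^ (k + 4) * (b * ((e * e) * d))
          = (b * (q ^ (k + 3) * d)) * (b * ((e * e) * d)) := by rw [bdpow (k + 3)]
      _ = b * ((q ^ (k + 3) * (d * b)) * ((e * e) * d)) := by noncomm_ring
      _ = b * ((q ^ (k + 3) * q) * ((e * e) * d)) := by rw [← hq]
      _ = b * (q ^ (k + 4) * ((e * e) * d)) := by rw [← pow_succ]
      _ = b * ((p ^ (k + 3) * q) * ((e * e) * d)) := by rw [qpow (k + 2)]
      _ = b * (p ^ (k + 3) * ((q * (e * e)) * d)) := by noncomm_ring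
      _ = b * (p ^ (k + 3) * (e * d)) := by rw [d2']
      _ = b * ((p ^ (k + 1 + 2) * e) * d) := by noncomm_ring
      _ = b * (p ^ (k + 1 + 1) * d) := by rw [d5 1]
    rw [lhs, rhs]

theorem key1' {R : Type*} [Ring R] (p b d e : R)
    (hqp : d * b * p = p * p) (hpq : p * (d * b) = d * b * (d * b))
    (hpnd : p * ((p - d * b) * d) = 0) (he : DIc (1 - p) e) : ∃ f, DIc (1 - b * d) f := by
  obtain ⟨ce, hee, k, hk, hpow⟩ := he
  set q := d * b with hq
  set n := p - q with hn
  set α := 1 - p with hα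
  set γ := 1 - q with hγ
  set β := 1 - b * d with hβ
  clear_value q n α γ β
  have hce : Commute e α := ce
  -- n-rules
  have hnp : n * p = 0 := by rw [hn, sub_mul, hqp, sub_self]
  have hnq : n * q = 0 := by rw [hn, sub_mul, hpq, sub_self]
  have hnn : n * n = 0 := by nth_rewrite 2 [hn]; rw [mul_sub, hnp, hnq, sub_zero]
  have hnnd : n * (n * d) = 0 := by rw [← mul_assoc, hnn, zero_mul]
  have hnα : n * α = n := by rw [hα, mul_sub, mul_one, hnp, sub_zero]
  have hnαj : ∀ j : ℕ, n * α ^ j = n := by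
    intro j; induction j with
    | zero => rw [pow_zero, mul_one]
    | succ j ih => rw [pow_succ, ← mul_assoc, ih, hnα]
  have hne : n * e = n := by
    have h1 : n * (α ^ (k + 1) * e) = n := by rw [← hpow]; exact hnαj k
    calc n * e = (n * α ^ (k + 1)) * e := by rw [hnαj]
    _ = n := by rw [mul_assoc]; exact h1
  have hαnd : α * (n * d) = n * d := by rw [hα, sub_mul, one_mul, hpnd, sub_zero]
  have hαjnd : ∀ j : ℕ, α ^ j * (n * d) = n * d := by
    intro j; induction j with
    | zero => rw [pow_zero, one_mul]
    | succ j ih => rw [pow_succ', mul_assoc, ih, hαnd]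
  have hend : e * (n * d) = n * d := by
    calc e * (n * d) = e * (α ^ (k + 1) * (n * d)) := by rw [hαjnd]
    _ = (e * α ^ (k + 1)) * (n * d) := by rw [mul_assoc]
    _ = (α ^ (k + 1) * e) * (n * d) := by rw [(hce.pow_right (k + 1)).eq]
    _ = α ^ k * (n * d) := by rw [← hpow]
    _ = n * d := hαjnd k
  have hqpn : q = p - n := by rw [hn]; abel
  have hqnd : q * (n * d) = 0 := by rw [hqpn, sub_mul, hpnd, hnnd, sub_self]
  -- pi
  set π := 1 - α * e with hπ
  clear_value π
  have heπ : e * π = 0 := by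
    have h3 : e * (α * e) = e := by rw [← mul_assoc]; exact hee.symm
    rw [hπ, mul_sub, mul_one, h3, sub_self]
  have hαee : α * (e * e) = e := by
    calc α * (e * e) = (α * e) * e := by rw [mul_assoc]
    _ = (e * α) * e := by rw [ce]
    _ = e := hee.symm
  have hπe : π * e = 0 := by rw [hπ, sub_mul, one_mul, mul_assoc, hαee, sub_self]
  have hαkπ : α ^ k * π = 0 := by
    rw [hπ, mul_sub, mul_one, ← mul_assoc, ← pow_succ, ← hpow, sub_self]
  have hcαπ : Commute α π := by
    rw [hπ]; exact (Commute.one_right α).sub_right ((Commute.refl α).mul_right hce.symm)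
  have hnπ : n * π = 0 := by rw [hπ, mul_sub, mul_one, ← mul_assoc, hnα, hne, sub_self]
  have hπnd : π * (n * d) = 0 := by
    rw [hπ, sub_mul, one_mul, mul_assoc, hend, hαnd, sub_self]
  have hππ : π * π = π := by
    nth_rewrite 1 [hπ]
    rw [sub_mul, one_mul, mul_assoc, heπ, mul_zero, sub_zero]
  -- S (geometric sum)
  set S := ∑ i ∈ Finset.range k, α ^ i with hS
  clear_value S
  have hcαS : Commute α S := by
    rw [hS]; exact Commute.sum_right _ _ _ (fun i _ => (Commute.refl α).pow_right i)
  have hceS : Commute e S := by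
    rw [hS]; exact Commute.sum_right _ _ _ (fun i _ => hce.pow_right i)
  have hcSπ : Commute S π := by
    rw [hπ]; exact (Commute.one_right S).sub_right ((hcαS.symm).mul_right (hceS.symm))
  have hSnd : S * (n * d) = k • (n * d) := by
    rw [hS, Finset.sum_mul]
    rw [Finset.sum_congr rfl (fun i _ => hαjnd i), Finset.sum_const, Finset.card_range]
  have hp1α : p = 1 - α := by rw [hα]; abel
  have hpS : p * S = 1 - α ^ k := by
    have h4 := geom_sum_mul α k
    have hc1 : (α - 1) * S = S * (α - 1) := (hcαS.sub_left (Commute.one_left S)).eq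
    rw [hp1α]
    calc (1 - α) * S = -((α - 1) * S) := by rw [← neg_sub α 1, neg_mul]
    _ = -(S * (α - 1)) := by rw [hc1]
    _ = -(α ^ k - 1) := by rw [hS, h4]
    _ = 1 - α ^ k := by abel
  -- w
  set w := e - π * S with hw
  clear_value w
  have hnw : n * w = n := by rw [hw, mul_sub, hne, ← mul_assoc, hnπ, zero_mul, sub_zero]
  have hwnd : w * (n * d) = n * d := by
    have h5 : (π * S) * (n * d) = 0 := by
      rw [mul_assoc, hSnd, nsmul_eq_mul, ← mul_assoc, (Nat.cast_commute (k : ℕ) π).symm.eq,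
        mul_assoc, hπnd, mul_zero]
    rw [hw, sub_mul, hend, h5, sub_zero]
  have hcαw : Commute α w := by
    rw [hw]; exact (hce.symm).sub_right (hcαπ.mul_right hcαS)
  have hcpw : Commute p w := by
    have : Commute α w := hcαw
    rw [hp1α]; exact (Commute.one_left w).sub_left this
  have hcpα : Commute p α := by rw [hp1α]; exact (Commute.one_left α).sub_left (Commute.refl α)
  -- the G = 0 identity
  have hwπ : w * π = -(π * S) := by
    have h6 : (π * S) * π = π * S := by
      rw [mul_assoc, hcSπ.eq, ← mul_assoc, hππ]
    rw [hw, sub_mul, heπ, h6, zero_sub]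
  have hpwπ : (p * w + 1) * π = 0 := by
    have hcpπ : p * π = π * p := by
      rw [hp1α]; exact ((Commute.one_left π).sub_left hcαπ).eq
    calc (p * w + 1) * π = p * (w * π) + π := by rw [add_mul, one_mul, mul_assoc]
    _ = -(p * (π * S)) + π := by rw [hwπ, mul_neg]
    _ = -((p * π) * S) + π := by rw [mul_assoc]
    _ = -((π * p) * S) + π := by rw [hcpπ]
    _ = -(π * (p * S)) + π := by rw [mul_assoc]
    _ = -(π * (1 - α ^ k)) + π := by rw [hpS]
    _ = -(π - π * α ^ k) + π := by rw [mul_sub, mul_one]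
    _ = π * α ^ k := by abel
    _ = α ^ k * π := (hcαπ.pow_left k).symm.eq
    _ = 0 := hαkπ
  have hαπS : α * (π * S) = π * (α * S) := by rw [← mul_assoc, hcαπ.eq, mul_assoc]
  have hαwE : α * w = α * e - π * (α * S) := by rw [hw, mul_sub, hαπS]
  have hαw1 : α * w - 1 = π * (-(1 + α * S)) := by
    rw [hαwE, mul_neg, mul_add, mul_one, hπ]
    abel
  have hG0 : (p * w + 1) * (α * w - 1) = 0 := by
    rw [hαw1, ← mul_assoc, hpwπ, zero_mul]
  have hαk1w : α ^ (k + 1) * w = α ^ k := by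
    calc α ^ (k + 1) * w = α ^ k * (α * w) := by rw [pow_succ, mul_assoc]
    _ = α ^ k * (α * e) - α ^ k * (π * (α * S)) := by rw [hαwE, mul_sub]
    _ = (α ^ k * α) * e - (α ^ k * π) * (α * S) := by rw [← mul_assoc, ← mul_assoc]
    _ = α ^ k := by rw [← pow_succ, ← hpow, hαkπ, zero_mul, sub_zero]
  -- gamma / beta relations
  have hγαn : γ = α + n := by rw [hγ, hα, hn]; abel
  have hβb : β * b = b * γ := by
    rw [hβ, hγ, sub_mul, mul_sub, one_mul, mul_one, mul_assoc, ← hq]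
  have hdβ : d * β = γ * d := by
    rw [hβ, hγ, mul_sub, sub_mul, mul_one, one_mul, ← mul_assoc, ← hq]
  have hβjb : ∀ j : ℕ, β ^ j * b = b * γ ^ j := by
    intro j; induction j with
    | zero => rw [pow_zero, pow_zero, one_mul, mul_one]
    | succ j ih =>
      calc β ^ (j + 1) * b = β * (β ^ j * b) := by rw [pow_succ', mul_assoc]
      _ = β * (b * γ ^ j) := by rw [ih]
      _ = (β * b) * γ ^ j := by rw [mul_assoc]
      _ = (b * γ) * γ ^ j := by rw [hβb]
      _ = b * γ ^ (j + 1) := by rw [mul_assoc, ← pow_succ']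
  have hnγ : n * γ = n := by rw [hγαn, mul_add, hnα, hnn, add_zero]
  have hnγj : ∀ j : ℕ, n * γ ^ j = n := by
    intro j; induction j with
    | zero => rw [pow_zero, mul_one]
    | succ j ih => rw [pow_succ, ← mul_assoc, ih, hnγ]
  -- M-collision rules
  have hβM : β * (b * (n * d)) = b * (n * d) := by
    have h5 : (b * d) * (b * (n * d)) = 0 := by
      calc (b * d) * (b * (n * d)) = b * ((d * b) * (n * d)) := by noncomm_ring
      _ = b * (q * (n * d)) := by rw [← hq]
      _ = 0 := by rw [hqnd, mul_zero]
    rw [hβ, sub_mul, one_mul, h5, sub_zero]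
  have hβjM : ∀ j : ℕ, β ^ j * (b * (n * d)) = b * (n * d) := by
    intro j; induction j with
    | zero => rw [pow_zero, one_mul]
    | succ j ih => rw [pow_succ', mul_assoc, ih, hβM]
  have hMβ : (b * (n * d)) * β = b * (n * d) := by
    have h6 : (b * (n * d)) * (b * d) = 0 := by
      calc (b * (n * d)) * (b * d) = b * ((n * (d * b)) * d) := by noncomm_ring
      _ = b * ((n * q) * d) := by rw [← hq]
      _ = 0 := by rw [hnq, zero_mul, mul_zero]
    rw [hβ, mul_sub, mul_one, h6, sub_zero]
  have hMM : (b * (n * d)) * (b * (n * d)) = 0 := by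
    calc (b * (n * d)) * (b * (n * d)) = b * ((n * (d * b)) * (n * d)) := by noncomm_ring
    _ = b * ((n * q) * (n * d)) := by rw [← hq]
    _ = 0 := by rw [hnq, zero_mul, mul_zero]
  have hMw : (b * (n * d)) * (b * (w * d)) = 0 := by
    calc (b * (n * d)) * (b * (w * d)) = b * ((n * (d * b)) * (w * d)) := by noncomm_ring
    _ = b * ((n * q) * (w * d)) := by rw [← hq]
    _ = 0 := by rw [hnq, zero_mul, mul_zero]
  have hwM : (b * (w * d)) * (b * (n * d)) = 0 := by
    calc (b * (w * d)) * (b * (n * d)) = b * (w * ((d * b) * (n * d))) := by noncomm_ring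
    _ = b * (w * (q * (n * d))) := by rw [← hq]
    _ = 0 := by rw [hqnd, mul_zero, mul_zero]
  -- key sandwich identities
  have hwγd : (w * γ) * d = (α * w) * d + n * d := by
    calc (w * γ) * d = (w * α) * d + (w * n) * d := by rw [hγαn, mul_add, add_mul]
    _ = (α * w) * d + w * (n * d) := by rw [← hcαw.eq, mul_assoc w n d]
    _ = (α * w) * d + n * d := by rw [hwnd]
  have hγwd : (γ * w) * d = (α * w) * d + n * d := by
    calc (γ * w) * d = (α * w) * d + (n * w) * d := by rw [hγαn, add_mul, add_mul]
    _ = (α * w) * d + n * d := by rw [hnw]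
  -- G-identity consequences
  have hpw1 : p * w = w - α * w := by rw [hp1α, sub_mul, one_mul]
  have hPW : (p * w) * (α * w) = w * (α * (p * w)) := by
    calc (p * w) * (α * w) = (w * p) * (α * w) := by rw [hcpw.eq]
    _ = w * ((p * α) * w) := by rw [mul_assoc, ← mul_assoc p α w]
    _ = w * ((α * p) * w) := by rw [hcpα.eq]
    _ = w * (α * (p * w)) := by rw [mul_assoc α p w]
  have hGel : w * (α * (p * w)) = 1 + p * w - α * w := by
    have h8 : (p * w + 1) * (α * w - 1) = (p * w) * (α * w) - p * w + α * w - 1 := by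
      noncomm_ring
    have h9 : (p * w) * (α * w) - p * w + α * w - 1 = 0 := by rw [← h8]; exact hG0
    rw [← hPW]
    refine sub_eq_zero.mp ?_
    calc (p * w) * (α * w) - (1 + p * w - α * w)
        = (p * w) * (α * w) - p * w + α * w - 1 := by abel
    _ = 0 := h9
  -- sandwich pieces for condition 2
  have s1 : q * (w * d) = p * (w * d) - n * d := by
    rw [hqpn, sub_mul]
    congr 1
    rw [← mul_assoc, hnw]
  have s3 : (w * γ) * (n * d) = n * d := by
    calc (w * γ) * (n * d) = w * (γ * (n * d)) := by rw [mul_assoc]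
    _ = w * (α * (n * d) + n * (n * d)) := by rw [hγαn, add_mul]
    _ = w * (n * d) := by rw [hαnd, hnnd, add_zero]
    _ = n * d := hwnd
  have s4 : (w * γ) * (p * (w * d)) = w * (α * (p * (w * d))) := by
    calc (w * γ) * (p * (w * d))
        = (w * α) * (p * (w * d)) + (w * n) * (p * (w * d)) := by rw [hγαn, mul_add, add_mul]
    _ = (w * α) * (p * (w * d)) + w * ((n * p) * (w * d)) := by
        rw [mul_assoc w n _, ← mul_assoc n p _]
    _ = (w * α) * (p * (w * d)) := by rw [hnp, zero_mul, mul_zero, add_zero]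
    _ = w * (α * (p * (w * d))) := by rw [mul_assoc]
  have s7 : w * (α * (p * (w * d))) = d + (w * d - ((α * w) * d + (α * w) * d)) := by
    have h11 : (w * (α * (p * w))) * d = w * (α * (p * (w * d))) := by noncomm_ring
    rw [← h11, hGel, hpw1]
    noncomm_ring
  have keyE : (γ * w) * d + ((w * γ) * d + (w * γ) * (q * (w * d))) = d + (w * d + n * d) := by
    calc (γ * w) * d + ((w * γ) * d + (w * γ) * (q * (w * d)))
        = (γ * w) * d + ((w * γ) * d + (w * γ) * (p * (w * d) - n * d)) := by rw [s1]
    _ = (γ * w) * d + ((w * γ) * d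
          + ((w * γ) * (p * (w * d)) - (w * γ) * (n * d))) := by rw [mul_sub]
    _ = ((α * w) * d + n * d) + (((α * w) * d + n * d)
          + ((d + (w * d - ((α * w) * d + (α * w) * d))) - n * d)) := by
        rw [s3, s4, s7, hγwd, hwγd]
    _ = d + (w * d + n * d) := by abel
  have e1a : (b * (w * d)) * β = b * ((w * γ) * d) := by
    calc (b * (w * d)) * β = b * (w * (d * β)) := by noncomm_ring
    _ = b * (w * (γ * d)) := by rw [hdβ]
    _ = b * ((w * γ) * d) := by noncomm_ring
  have e2a : β * (b * (w * d)) = b * ((γ * w) * d) := by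
    calc β * (b * (w * d)) = (β * b) * (w * d) := by rw [← mul_assoc]
    _ = (b * γ) * (w * d) := by rw [hβb]
    _ = b * ((γ * w) * d) := by noncomm_ring
  refine ⟨1 + b * (w * d) - b * (n * d), ?_, ?_, k, hk, ?_⟩
  · -- commutation
    rw [sub_mul, add_mul, one_mul, mul_sub, mul_add, mul_one, e1a, e2a, hMβ, hβM]
    rw [hwγd, hγwd]
  · -- f = f β f
    have e1 : (1 + b * (w * d) - b * (n * d)) * β = β + b * ((w * γ) * d) - b * (n * d) := by
      rw [sub_mul, add_mul, one_mul, e1a, hMβ]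
    have e5 : (b * ((w * γ) * d)) * (b * (w * d)) = b * ((w * γ) * (q * (w * d))) := by
      calc (b * ((w * γ) * d)) * (b * (w * d))
          = b * ((w * γ) * ((d * b) * (w * d))) := by noncomm_ring
      _ = b * ((w * γ) * (q * (w * d))) := by rw [← hq]
    have e6 : (b * ((w * γ) * d)) * (b * (n * d)) = 0 := by
      calc (b * ((w * γ) * d)) * (b * (n * d))
          = b * ((w * γ) * ((d * b) * (n * d))) := by noncomm_ring
      _ = b * ((w * γ) * (q * (n * d))) := by rw [← hq]
      _ = 0 := by rw [hqnd, mul_zero, mul_zero]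
    have keyEb := congrArg (fun z => b * z) keyE
    simp only [mul_add] at keyEb
    symm
    calc (1 + b * (w * d) - b * (n * d)) * β * (1 + b * (w * d) - b * (n * d))
        = (β + b * ((w * γ) * d) - b * (n * d)) * (1 + b * (w * d) - b * (n * d)) := by
          rw [e1]
    _ = β + β * (b * (w * d)) - β * (b * (n * d))
        + ((b * ((w * γ) * d)) + (b * ((w * γ) * d)) * (b * (w * d))
            - (b * ((w * γ) * d)) * (b * (n * d)))
        - ((b * (n * d)) + (b * (n * d)) * (b * (w * d))
            - (b * (n * d)) * (b * (n * d))) := by noncomm_ring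
    _ = β + b * ((γ * w) * d) - b * (n * d)
        + ((b * ((w * γ) * d)) + b * ((w * γ) * (q * (w * d))) - 0)
        - ((b * (n * d)) + 0 - 0) := by rw [e2a, hβM, e5, e6, hMw, hMM]
    _ = β + (b * ((γ * w) * d) + (b * ((w * γ) * d) + b * ((w * γ) * (q * (w * d)))))
        - b * (n * d) - b * (n * d) := by abel
    _ = β + (b * d + (b * (w * d) + b * (n * d))) - b * (n * d) - b * (n * d) := by
          rw [keyEb]
    _ = 1 + b * (w * d) - b * (n * d) := by rw [hβ]; abel
  · -- power condition
    have hrec : ∀ j : ℕ, γ ^ (j + 1) - α ^ (j + 1) = α * (γ ^ j - α ^ j) + n := by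
      intro j
      calc γ ^ (j + 1) - α ^ (j + 1) = γ * γ ^ j - α * α ^ j := by rw [pow_succ', pow_succ']
      _ = (α * γ ^ j + n * γ ^ j) - α * α ^ j := by rw [hγαn, add_mul]
      _ = (α * γ ^ j + n) - α * α ^ j := by rw [hnγj]
      _ = α * (γ ^ j - α ^ j) + n := by rw [mul_sub]; abel
    have hI1 : ∀ j : ℕ, (γ ^ j - α ^ j) * w = γ ^ j - α ^ j := by
      intro j; induction j with
      | zero => simp
      | succ j ih => rw [hrec j, add_mul, mul_assoc, ih, hnw]
    have hI2 : ∀ j : ℕ, (γ ^ j - α ^ j) * d = j • (n * d) := by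
      intro j; induction j with
      | zero => simp
      | succ j ih => rw [hrec j, add_mul, mul_assoc, ih, mul_smul_comm, hαnd, succ_nsmul]
    have hβk1 : β ^ (k + 1) = β ^ k - b * (γ ^ k * d) := by
      calc β ^ (k + 1) = β ^ k * β := pow_succ β k
      _ = β ^ k - β ^ k * (b * d) := by rw [hβ, mul_sub, mul_one]
      _ = β ^ k - b * (γ ^ k * d) := by rw [← mul_assoc, hβjb k, mul_assoc]
    have hkey3 : γ ^ (k + 1) * (w * d) = γ ^ k * d + n * d := by
      have h7 : α ^ (k + 1) + (γ ^ (k + 1) - α ^ (k + 1)) = γ ^ (k + 1) := by abel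
      have h7' : γ ^ k = α ^ k + (γ ^ k - α ^ k) := by abel
      calc γ ^ (k + 1) * (w * d) = (γ ^ (k + 1) * w) * d := by rw [mul_assoc]
      _ = ((α ^ (k + 1) + (γ ^ (k + 1) - α ^ (k + 1))) * w) * d := by rw [h7]
      _ = (α ^ (k + 1) * w + (γ ^ (k + 1) - α ^ (k + 1)) * w) * d := by rw [add_mul]
      _ = (α ^ k + (γ ^ (k + 1) - α ^ (k + 1))) * d := by rw [hαk1w, hI1]
      _ = α ^ k * d + (k + 1) • (n * d) := by rw [add_mul, hI2]
      _ = α ^ k * d + (k • (n * d) + n * d) := by rw [succ_nsmul]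
      _ = α ^ k * d + ((γ ^ k - α ^ k) * d + n * d) := by rw [hI2]
      _ = γ ^ k * d + n * d := by rw [h7']; rw [add_mul]; abel
    symm
    calc β ^ (k + 1) * (1 + b * (w * d) - b * (n * d))
        = β ^ (k + 1) + β ^ (k + 1) * (b * (w * d)) - β ^ (k + 1) * (b * (n * d)) := by
          rw [mul_sub, mul_add, mul_one]
    _ = β ^ (k + 1) + b * (γ ^ (k + 1) * (w * d)) - b * (n * d) := by
          rw [← mul_assoc, hβjb (k + 1), mul_assoc, hβjM]
    _ = (β ^ k - b * (γ ^ k * d)) + b * (γ ^ k * d + n * d) - b * (n * d) := by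
          rw [hβk1, hkey3]
    _ = β ^ k := by rw [mul_add]; abel

theorem keyLam {R : Type*} [Ring R] [Algebra ℂ R] (a b c d : R)
    (h1 : (a * c) ^ 2 = d * b * (a * c)) (h2 : (d * b) ^ 2 = a * c * (d * b))
    (h4 : c * (a * c) * d = c * (d * b) * d) (lam : ℂ) :
    (∃ e, IsDrazinInverse (lam • (1 : R) - a * c) e) →
      ∃ f, IsDrazinInverse (lam • (1 : R) - b * d) f := by
  rintro ⟨e, he⟩
  have he' : DIc (lam • (1 : R) - a * c) e := he.dic
  have hA : d * b * (a * c) = a * c * (a * c) := by rw [← h1, sq]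
  have hB : a * c * (d * b) = d * b * (d * b) := by rw [← h2, sq]
  have hC : a * c * ((a * c - d * b) * d) = 0 := by
    have : a * c * ((a * c - d * b) * d) = a * (c * (a * c) * d) - a * (c * (d * b) * d) := by
      noncomm_ring
    rw [this, h4, sub_self]
  by_cases hl : lam = 0
  · subst hl
    rw [zero_smul, zero_sub] at he'
    have he'' : DIc (a * c) (-e) := by simpa using he'.neg
    obtain ⟨f, hf⟩ := key0' (a * c) b d (-e) hA hB hC he''
    refine ⟨-f, ?_⟩
    rw [zero_smul, zero_sub]
    exact hf.neg.isDrazinInverse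
  · set μ := lam⁻¹ with hμdef
    have hμ : μ ≠ 0 := inv_ne_zero hl
    have hμl : μ * lam = 1 := inv_mul_cancel₀ hl
    have hlμ : lam * μ = 1 := mul_inv_cancel₀ hl
    have sm1 : ∀ x y : R, (μ • x) * y = μ • (x * y) := fun x y => smul_mul_assoc μ x y
    have sm2 : ∀ x y : R, x * (μ • y) = μ • (x * y) := fun x y => mul_smul_comm μ x y
    -- scaled element and hypothesis
    have hscEl : 1 - (μ • a) * c = μ • (lam • (1 : R) - a * c) := by
      rw [smul_sub, smul_smul, hμl, one_smul, smul_mul_assoc]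
    have hsc : DIc (1 - (μ • a) * c) (μ⁻¹ • e) := by
      rw [hscEl]; exact he'.smul hμ
    -- scaled hypotheses
    have hA2 : (μ • d) * b * ((μ • a) * c) = ((μ • a) * c) * ((μ • a) * c) := by
      simp only [smul_mul_assoc, mul_smul_comm, smul_smul]
      rw [hA]
    have hB2 : ((μ • a) * c) * ((μ • d) * b) = (μ • d) * b * ((μ • d) * b) := by
      simp only [smul_mul_assoc, mul_smul_comm, smul_smul]
      rw [hB]
    have hC2 : ((μ • a) * c) * (((μ • a) * c - (μ • d) * b) * (μ • d)) = 0 := by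
      have hfold : (μ • a) * c - (μ • d) * b = μ • (a * c - d * b) := by
        rw [smul_sub, sm1, sm1]
      rw [hfold]
      simp only [smul_mul_assoc, mul_smul_comm, smul_smul]
      rw [hC, smul_zero]
    obtain ⟨f, hf⟩ := key1' ((μ • a) * c) b (μ • d) (μ⁻¹ • e) hA2 hB2 hC2 hsc
    have hFold2 : 1 - b * (μ • d) = μ • (lam • (1 : R) - b * d) := by
      rw [smul_sub, smul_smul, hμl, one_smul, sm2]
    rw [hFold2] at hf
    have hf2 := hf.smul hl
    rw [smul_smul, hlμ, one_smul] at hf2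
    exact ⟨lam⁻¹ • f, hf2.isDrazinInverse⟩

theorem stmt_16 {X : Type*} [NormedAddCommGroup X] [NormedSpace ℂ X] [CompleteSpace X]
    (A B C D : X →L[ℂ] X)
    (h1 : (A * C) ^ 2 = (D * B) * (A * C))
    (h2 : (D * B) ^ 2 = (A * C) * (D * B))
    (h3 : B * (A * C) * A = B * (D * B) * A)
    (h4 : C * (A * C) * D = C * (D * B) * D) :
    drazinSpectrum (B * D) = drazinSpectrum (A * C) := by
  have main : ∀ lam : ℂ,
      (∃ e, IsDrazinInverse (lam • (1 : X →L[ℂ] X) - B * D) e) ↔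
        (∃ e, IsDrazinInverse (lam • (1 : X →L[ℂ] X) - A * C) e) := by
    intro lam
    constructor
    · intro h
      have s1 := keyLam B D D B (by rw [sq]) (by rw [sq]) rfl lam h
      have s2 := keyLam D C B A h2 h1 h3.symm lam s1
      exact keyLam C A A C (by rw [sq]) (by rw [sq]) rfl lam s2
    · intro h
      exact keyLam A B C D h1 h2 h4 lam h
  ext lam
  simp only [drazinSpectrum, Set.mem_setOf_eq]
  exact not_congr (main lam)
end
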